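/- arXiv:1903.04606 — 8 statements merged into one kernel-verified Lean document; each statement's English description precedes it below -/
import Mathlib

section
/- Let R be a Dedekind domain whose ideal class group has order 2, and let x be a nonzero nonunit of R. If (x) = 𝔮₁⋯𝔮ₙ𝔭₁⋯𝔭ₘ where the 𝔮ᵢ are principal prime ideals and the 𝔭ⱼ are nonprincipal prime ideals, then m is even and every factorization of x into irreducible elements has exactly n + m/2 factors. -/
open scoped Classical

set_option maxHeartbeats 1000000
set_option synthInstance.maxHeartbeats 400000

section Aux

variable {R : Type*} [CommRing R] [IsDomain R] [IsDedekindDomain R]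

/-- In a group of order 2, the product of two nontrivial elements is trivial. -/
lemma order_two_mul_eq_one {G : Type*} [Group G] (hG : Nat.card G = 2)
    {g h : G} (hg : g ≠ 1) (hh : h ≠ 1) : g * h = 1 := by
  have hfin : Finite G := Nat.finite_of_card_ne_zero (by omega)
  obtain ⟨y, hy, huniq⟩ := (Nat.card_eq_two_iff' (1 : G)).mp hG
  have hgh : g = h := (huniq g hg).trans (huniq h hh).symm
  have := pow_card_eq_one' (G := G) (x := g)
  rw [hG] at this
  rw [hgh] at this ⊢
  rwa [← sq]

/-- The class of a nonzero ideal. -/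
noncomputable def cls (I : Ideal R) (h : I ≠ 0) : ClassGroup R :=
  ClassGroup.mk0 ⟨I, mem_nonZeroDivisors_of_ne_zero h⟩

lemma cls_eq_one_iff {I : Ideal R} (h : I ≠ 0) : cls I h = 1 ↔ I.IsPrincipal :=
  ClassGroup.mk0_eq_one_iff _

lemma cls_mul {I J : Ideal R} (hI : I ≠ 0) (hJ : J ≠ 0) :
    cls (I * J) (mul_ne_zero hI hJ) = cls I hI * cls J hJ := by
  unfold cls
  rw [← map_mul]
  rfl

lemma cls_mul' {I J K : Ideal R} (hI : I ≠ 0) (hJ : J ≠ 0) (hK : K ≠ 0)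
    (h : I * J = K) : cls I hI * cls J hJ = cls K hK := by
  subst h
  exact (cls_mul hI hJ).symm

lemma prime_ne_top {P : Ideal R} (hP : Prime P) : P ≠ ⊤ := fun h =>
  hP.not_unit (Ideal.isUnit_iff.mpr h)

lemma prod_ne_top {f : Multiset (Ideal R)} (hf : ∀ P ∈ f, Prime P) (hne : f ≠ 0) :
    f.prod ≠ ⊤ := by
  obtain ⟨P, hPf⟩ := Multiset.exists_mem_of_ne_zero hne
  obtain ⟨g, rfl⟩ := Multiset.exists_cons_of_mem hPf
  rw [Multiset.prod_cons]
  intro h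
  have hle : P * g.prod ≤ P := Ideal.mul_le_left
  rw [h] at hle
  exact prime_ne_top (hf P hPf) (top_le_iff.mp hle)

/-- Key lemma: an irreducible element's ideal cannot split into two proper factors
with one of them principal. -/
lemma no_split (hclass : Nat.card (ClassGroup R) = 2)
    {α : R} (hα : Irreducible α) {I J : Ideal R}
    (hI : I ≠ ⊤) (hJ : J ≠ ⊤) (hIp : I.IsPrincipal)
    (hIJ : I * J = Ideal.span {α}) : False := by
  have hα0 : α ≠ 0 := hα.ne_zero
  have hspan0 : Ideal.span {α} ≠ 0 := by
    simp [Ideal.span_singleton_eq_bot, hα0, Ideal.zero_eq_bot]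
  have hI0 : I ≠ 0 := by rintro rfl; simp [Ideal.zero_eq_bot] at hIJ; exact hspan0 hIJ.symm
  have hJ0 : J ≠ 0 := by rintro rfl; simp [Ideal.zero_eq_bot] at hIJ; exact hspan0 hIJ.symm
  have hmul : cls I hI0 * cls J hJ0 = 1 := by
    rw [cls_mul' hI0 hJ0 hspan0 hIJ, cls_eq_one_iff]
    exact ⟨α, by rw [Ideal.submodule_span_eq]⟩
  rw [(cls_eq_one_iff hI0).mpr hIp, one_mul] at hmul
  have hJp : J.IsPrincipal := (cls_eq_one_iff hJ0).mp hmul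
  obtain ⟨β, hβ⟩ := hIp
  obtain ⟨γ, hγ⟩ := hJp
  rw [Ideal.submodule_span_eq] at hβ hγ
  rw [hβ, hγ, Ideal.span_singleton_mul_span_singleton] at hIJ
  have hassoc : Associated (β * γ) α := Ideal.span_singleton_eq_span_singleton.mp hIJ
  have : Irreducible (β * γ) := hassoc.symm.irreducible hα
  rcases this.isUnit_or_isUnit rfl with hu | hu
  · exact hI (by rw [hβ, Ideal.span_singleton_eq_top]; exact hu)
  · exact hJ (by rw [hγ, Ideal.span_singleton_eq_top]; exact hu)

/-- Dichotomy: in a Dedekind domain with class number 2, the ideal generated by an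
irreducible element is either a principal prime or a product of two nonprincipal primes. -/
lemma irred_prime_factors (hclass : Nat.card (ClassGroup R) = 2)
    {α : R} (hα : Irreducible α) :
    ∃ f : Multiset (Ideal R), (∀ P ∈ f, Prime P) ∧ f.prod = Ideal.span {α} ∧
      Multiset.card f + f.countP (fun I => I.IsPrincipal) = 2 := by
  have hα0 : α ≠ 0 := hα.ne_zero
  have hspan0 : Ideal.span {α} ≠ 0 := by
    simp [Ideal.span_singleton_eq_bot, hα0, Ideal.zero_eq_bot]
  obtain ⟨f, hfp, hfassoc⟩ :=
    UniqueFactorizationMonoid.exists_prime_factors (Ideal.span {α}) hspan0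
  have hfprod : f.prod = Ideal.span {α} := associated_iff_eq.mp hfassoc
  refine ⟨f, hfp, hfprod, ?_⟩
  by_cases hex : ∃ P ∈ f, P.IsPrincipal
  · -- f = {P}, P principal prime
    obtain ⟨P, hPf, hPp⟩ := hex
    obtain ⟨g, rfl⟩ := Multiset.exists_cons_of_mem hPf
    have hg0 : g = 0 := by
      by_contra hg
      exact no_split hclass hα (prime_ne_top (hfp P hPf))
        (prod_ne_top (fun Q hQ => hfp Q (Multiset.mem_cons_of_mem hQ)) hg) hPp
        (by rw [← Multiset.prod_cons, hfprod])
    subst hg0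
    rw [show (P ::ₘ 0 : Multiset (Ideal R)) = {P} from rfl, Multiset.card_singleton,
      show ({P} : Multiset (Ideal R)) = P ::ₘ 0 from rfl, Multiset.countP_cons,
      Multiset.countP_zero, if_pos hPp]
  · push_neg at hex
    -- no principal primes; show card = 2
    rcases f.empty_or_exists_mem with rfl | ⟨P, hPf⟩
    · exfalso
      rw [Multiset.prod_zero] at hfprod
      exact hα.not_isUnit (Ideal.span_singleton_eq_top.mp
        (by rw [← hfprod, Ideal.one_eq_top]))
    obtain ⟨g, rfl⟩ := Multiset.exists_cons_of_mem hPf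
    rcases g.empty_or_exists_mem with rfl | ⟨Q, hQg⟩
    · exfalso
      rw [Multiset.prod_cons, Multiset.prod_zero, mul_one] at hfprod
      exact hex P hPf ⟨α, by rw [hfprod, Ideal.submodule_span_eq]⟩
    obtain ⟨h, rfl⟩ := Multiset.exists_cons_of_mem hQg
    have hP0 : P ≠ 0 := (hfp P hPf).ne_zero
    have hQ0 : Q ≠ 0 := (hfp Q (by simp)).ne_zero
    have hPnp : ¬ P.IsPrincipal := hex P hPf
    have hQnp : ¬ Q.IsPrincipal := hex Q (by simp)
    have hPQprin : (P * Q).IsPrincipal := by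
      have h1 : cls P hP0 ≠ 1 := fun hc => hPnp ((cls_eq_one_iff hP0).mp hc)
      have h2 : cls Q hQ0 ≠ 1 := fun hc => hQnp ((cls_eq_one_iff hQ0).mp hc)
      have := order_two_mul_eq_one hclass h1 h2
      rw [← cls_mul hP0 hQ0] at this
      exact (cls_eq_one_iff _).mp this
    have hh0 : h = 0 := by
      by_contra hh
      refine no_split hclass hα ?_ (prod_ne_top (fun S hS => hfp S (by simp [hS])) hh)
        hPQprin ?_
      · intro htop
        have hle : P * Q ≤ P := Ideal.mul_le_left
        rw [htop] at hle
        exact prime_ne_top (hfp P hPf) (top_le_iff.mp hle)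
      · rw [← hfprod, Multiset.prod_cons, Multiset.prod_cons, mul_assoc]
    subst hh0
    rw [show (P ::ₘ Q ::ₘ 0 : Multiset (Ideal R)) = P ::ₘ ({Q} : Multiset (Ideal R)) from rfl,
      Multiset.countP_cons, if_neg hPnp,
      show ({Q} : Multiset (Ideal R)) = Q ::ₘ 0 from rfl, Multiset.countP_cons,
      Multiset.countP_zero, if_neg hQnp]
    simp

/-- Counting: a multiset of irreducibles has a combined prime ideal factorization
whose (card + principal count) equals twice the number of irreducibles. -/
lemma factors_of_multiset (hclass : Nat.card (ClassGroup R) = 2)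
    (g : Multiset R) (hg : ∀ a ∈ g, Irreducible a) :
    ∃ T : Multiset (Ideal R), (∀ P ∈ T, Prime P) ∧
      T.prod = (g.map (fun a => Ideal.span {a})).prod ∧
      Multiset.card T + T.countP (fun I => I.IsPrincipal) = 2 * Multiset.card g := by
  induction g using Multiset.induction_on with
  | empty => exact ⟨0, by simp⟩
  | cons a s ih =>
    obtain ⟨T, hT, hTprod, hTcount⟩ := ih (fun b hb => hg b (Multiset.mem_cons_of_mem hb))
    obtain ⟨f, hf, hfprod, hfcount⟩ :=
      irred_prime_factors hclass (hg a (Multiset.mem_cons_self a s))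
    refine ⟨f + T, ?_, ?_, ?_⟩
    · intro P hP
      rcases Multiset.mem_add.mp hP with h | h
      · exact hf P h
      · exact hT P h
    · rw [Multiset.prod_add, hfprod, hTprod, Multiset.map_cons, Multiset.prod_cons]
    · rw [Multiset.card_add, Multiset.countP_add, Multiset.card_cons]
      omega

lemma key_count (hclass : Nat.card (ClassGroup R) = 2)
    (x : R) (hx0 : x ≠ 0)
    (n m : ℕ) (𝔮 : Fin n → Ideal R) (𝔭 : Fin m → Ideal R)
    (hq : ∀ i, (𝔮 i).IsPrime ∧ 𝔮 i ≠ ⊥ ∧ (𝔮 i).IsPrincipal)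
    (hp : ∀ j, (𝔭 j).IsPrime ∧ 𝔭 j ≠ ⊥ ∧ ¬(𝔭 j).IsPrincipal)
    (hfac : Ideal.span {x} = (∏ i, 𝔮 i) * ∏ j, 𝔭 j)
    (g : Multiset R) (hg : ∀ a ∈ g, Irreducible a)
    (hgx : Associated g.prod x) : 2 * Multiset.card g = 2 * n + m := by
  obtain ⟨T, hT, hTprod, hTcount⟩ := factors_of_multiset hclass g hg
  -- the comparison multiset
  set S : Multiset (Ideal R) :=
    (Finset.univ.val.map 𝔮) + (Finset.univ.val.map 𝔭) with hS
  have hSprime : ∀ P ∈ S, Prime P := by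
    intro P hP
    rcases Multiset.mem_add.mp hP with h | h
    · obtain ⟨i, _, rfl⟩ := Multiset.mem_map.mp h
      exact (Ideal.prime_iff_isPrime (hq i).2.1).mpr (hq i).1
    · obtain ⟨j, _, rfl⟩ := Multiset.mem_map.mp h
      exact (Ideal.prime_iff_isPrime (hp j).2.1).mpr (hp j).1
  have hSprod : S.prod = Ideal.span {x} := by
    rw [hS, Multiset.prod_add, hfac]
    rfl
  have hTprod' : T.prod = Ideal.span {x} := by
    rw [hTprod, Ideal.multiset_prod_span_singleton,
      Ideal.span_singleton_eq_span_singleton.mpr hgx]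
  have hTS : T = S := by
    have hrel := prime_factors_unique hT hSprime
      (associated_iff_eq.mpr (hTprod'.trans hSprod.symm))
    exact Multiset.rel_eq.mp (hrel.mono fun a _ b _ hab => associated_iff_eq.mp hab)
  have hcardS : Multiset.card S = n + m := by simp [hS]
  have hcountS : S.countP (fun I => I.IsPrincipal) = n := by
    rw [hS, Multiset.countP_add]
    have h1 : (Finset.univ.val.map 𝔮).countP (fun I => I.IsPrincipal) =
        Multiset.card (Finset.univ.val.map 𝔮) := by
      rw [Multiset.countP_eq_card.mpr]
      intro I hI
      obtain ⟨i, _, rfl⟩ := Multiset.mem_map.mp hI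
      exact (hq i).2.2
    have h2 : (Finset.univ.val.map 𝔭).countP (fun I => I.IsPrincipal) = 0 := by
      rw [Multiset.countP_eq_zero.mpr]
      intro I hI
      obtain ⟨j, _, rfl⟩ := Multiset.mem_map.mp hI
      exact (hp j).2.2
    rw [h1, h2, Multiset.card_map]
    simp
  rw [hTS, hcardS, hcountS] at hTcount
  omega

end Aux

theorem class_number_two_factorization_length
    {R : Type*} [CommRing R] [IsDomain R] [IsDedekindDomain R]
    (hclass : Nat.card (ClassGroup R) = 2)
    (x : R) (hx0 : x ≠ 0) (hxu : ¬IsUnit x)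
    (n m : ℕ) (𝔮 : Fin n → Ideal R) (𝔭 : Fin m → Ideal R)
    (hq : ∀ i, (𝔮 i).IsPrime ∧ 𝔮 i ≠ ⊥ ∧ (𝔮 i).IsPrincipal)
    (hp : ∀ j, (𝔭 j).IsPrime ∧ 𝔭 j ≠ ⊥ ∧ ¬(𝔭 j).IsPrincipal)
    (hfac : Ideal.span {x} = (∏ i, 𝔮 i) * ∏ j, 𝔭 j) :
    Even m ∧
      ∀ (k : ℕ) (α : Fin k → R), (∀ i, Irreducible (α i)) →
        x = ∏ i, α i → k = n + m / 2 := by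
  have hEven : Even m := by
    obtain ⟨g, hgirr, hgassoc⟩ := WfDvdMonoid.exists_factors x hx0
    have := key_count hclass x hx0 n m 𝔮 𝔭 hq hp hfac g hgirr hgassoc
    exact ⟨Multiset.card g - n, by omega⟩
  refine ⟨hEven, ?_⟩
  intro k α hαirr hαprod
  set g : Multiset R := Finset.univ.val.map α with hg
  have hgcard : Multiset.card g = k := by simp [hg]
  have hgprod : g.prod = x := by rw [hαprod]; rfl
  have := key_count hclass x hx0 n m 𝔮 𝔭 hq hp hfac g
    (fun a ha => by obtain ⟨i, _, rfl⟩ := Multiset.mem_map.mp ha; exact hαirr i)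
    (by rw [hgprod])
  obtain ⟨r, hr⟩ := hEven
  omega
end

section
/- Let R be a Dedekind domain with class group of order 2. If α is an irreducible element of R, then (α) is either a prime ideal, or 𝔭² for a nonprincipal prime ideal 𝔭, or 𝔭𝔮 for distinct nonprincipal prime ideals 𝔭 and 𝔮. -/
private lemma aux_mul_eq_one {G : Type*} [Group G] (h2 : Nat.card G = 2)
    {a b : G} (ha : a ≠ 1) (hb : b ≠ 1) : a * b = 1 := by
  classical
  have hfin : Finite G := Nat.finite_of_card_ne_zero (by omega)
  have := Fintype.ofFinite G
  by_contra h
  have h1a : (1 : G) ≠ a := Ne.symm ha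
  have h1ab : (1 : G) ≠ a * b := fun h' => h h'.symm
  have haab : a ≠ a * b := fun h' => hb (left_eq_mul.mp h')
  have hcard : ({1, a, a * b} : Finset G).card = 3 := by
    rw [Finset.card_insert_of_notMem (by simp [h1a, h1ab]),
      Finset.card_insert_of_notMem (by simp [haab]), Finset.card_singleton]
  have hle : ({1, a, a * b} : Finset G).card ≤ Fintype.card G := Finset.card_le_univ _
  rw [hcard, ← Nat.card_eq_fintype_card, h2] at hle
  omega

theorem class_number_two_irreducible_classification
    {R : Type*} [CommRing R] [IsDomain R] [IsDedekindDomain R]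
    (hclass : Nat.card (ClassGroup R) = 2)
    (α : R) (hα : Irreducible α) :
    (Ideal.span {α} : Ideal R).IsPrime ∨
    (∃ 𝔭 : Ideal R, 𝔭.IsPrime ∧ 𝔭 ≠ ⊥ ∧ ¬𝔭.IsPrincipal ∧
      Ideal.span {α} = 𝔭 ^ 2) ∨
    (∃ 𝔭 𝔮 : Ideal R, 𝔭 ≠ 𝔮 ∧ 𝔭.IsPrime ∧ 𝔮.IsPrime ∧ 𝔭 ≠ ⊥ ∧ 𝔮 ≠ ⊥ ∧
      ¬𝔭.IsPrincipal ∧ ¬𝔮.IsPrincipal ∧ Ideal.span {α} = 𝔭 * 𝔮) := by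
  classical
  have hα0 : α ≠ 0 := hα.ne_zero
  set I : Ideal R := Ideal.span {α} with hI
  have hI0 : I ≠ 0 := by
    simp [hI, Ideal.span_singleton_eq_bot, hα0]
  have hItop : I ≠ ⊤ := by
    simp only [hI, Ne, Ideal.span_singleton_eq_top]; exact hα.not_isUnit
  set s := UniqueFactorizationMonoid.normalizedFactors I with hs
  have hprod : s.prod = I := by
    have := UniqueFactorizationMonoid.prod_normalizedFactors hI0
    rwa [associated_iff_eq] at this
  have hprime : ∀ p ∈ s, Prime p :=
    fun p hp => UniqueFactorizationMonoid.prime_of_normalized_factor p hp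
  have key : ∀ p q : Ideal R, p ≠ 0 → q ≠ 0 → ¬p.IsPrincipal → ¬q.IsPrincipal →
      (p * q).IsPrincipal := by
    intro p q hp0 hq0 hpP hqP
    have hp : p ∈ nonZeroDivisors (Ideal R) := mem_nonZeroDivisors_of_ne_zero hp0
    have hq : q ∈ nonZeroDivisors (Ideal R) := mem_nonZeroDivisors_of_ne_zero hq0
    have h1 : ClassGroup.mk0 ⟨p, hp⟩ ≠ 1 := fun h => hpP ((ClassGroup.mk0_eq_one_iff hp).mp h)
    have h2 : ClassGroup.mk0 ⟨q, hq⟩ ≠ 1 := fun h => hqP ((ClassGroup.mk0_eq_one_iff hq).mp h)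
    have := aux_mul_eq_one hclass h1 h2
    rw [← MonoidHom.map_mul ClassGroup.mk0] at this
    exact (ClassGroup.mk0_eq_one_iff (mul_mem hp hq)).mp this
  by_cases hcase : ∃ p ∈ s, p.IsPrincipal
  · -- some prime factor is principal → span α is prime
    obtain ⟨p, hps, ⟨π, hπ⟩⟩ := hcase
    have hpPrime := hprime p hps
    have hp0 : p ≠ ⊥ := hpPrime.ne_zero
    rw [Ideal.submodule_span_eq] at hπ
    have hπ0 : π ≠ 0 := by rintro rfl; exact hp0 (hπ.trans (Ideal.span_singleton_eq_bot.mpr rfl))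
    have hπprime : Prime π := by
      rw [← Ideal.span_singleton_prime hπ0, ← hπ]
      exact Ideal.isPrime_of_prime hpPrime
    have hdvd : p ∣ I := by
      rw [← hprod]; exact Multiset.dvd_prod hps
    have hπα : π ∣ α := by
      rw [Ideal.dvd_iff_le, hπ] at hdvd
      exact Ideal.span_singleton_le_span_singleton.mp (by rwa [hI] at hdvd)
    obtain ⟨c, hc⟩ := hπα
    rcases hα.isUnit_or_isUnit hc with h | h
    · exact absurd h hπprime.not_isUnit
    · left
      have heq : Ideal.span {α} = Ideal.span {π} := by
        rw [Ideal.span_singleton_eq_span_singleton]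
        exact Associated.symm ⟨h.unit, hc.symm⟩
      rw [hI, heq, Ideal.span_singleton_prime hπ0]
      exact hπprime
  · push_neg at hcase
    have hIP : I.IsPrincipal := ⟨α, by rw [hI, Ideal.submodule_span_eq]⟩
    have hcard1 : Multiset.card s ≠ 0 := by
      intro h
      rw [Multiset.card_eq_zero] at h
      rw [h, Multiset.prod_zero] at hprod
      exact hItop (by rw [← hprod, Ideal.one_eq_top])
    have hcard2 : Multiset.card s ≠ 1 := by
      intro h
      rw [Multiset.card_eq_one] at h
      obtain ⟨p, hp⟩ := h
      rw [hp, Multiset.prod_singleton] at hprod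
      exact hcase p (by rw [hp]; exact Multiset.mem_singleton_self p) (hprod ▸ hIP)
    have hcard3 : Multiset.card s ≤ 2 := by
      by_contra hgt
      push_neg at hgt
      obtain ⟨p, hp⟩ := Multiset.card_pos_iff_exists_mem.mp (show (0:ℕ) < Multiset.card s by omega)
      obtain ⟨s', hs'⟩ := Multiset.exists_cons_of_mem hp
      have hcs' : 0 < Multiset.card s' := by
        rw [hs', Multiset.card_cons] at hgt; omega
      obtain ⟨q, hq⟩ := Multiset.card_pos_iff_exists_mem.mp hcs'
      obtain ⟨t, ht⟩ := Multiset.exists_cons_of_mem hq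
      have hseq : s = p ::ₘ q ::ₘ t := by rw [hs', ht]
      have ht0 : t ≠ 0 := by
        intro h'
        rw [hseq, h'] at hgt
        simp at hgt
      have hpmem : p ∈ s := hp
      have hqmem : q ∈ s := by rw [hseq]; exact Multiset.mem_cons_of_mem (Multiset.mem_cons_self _ _)
      have hpq : (p * q).IsPrincipal :=
        key p q (hprime p hpmem).ne_zero (hprime q hqmem).ne_zero
          (hcase p hpmem) (hcase q hqmem)
      have htprime : ∀ r ∈ t, Prime r := fun r hr => hprime r
        (by rw [hseq]; exact Multiset.mem_cons_of_mem (Multiset.mem_cons_of_mem hr))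
      have htprod0 : t.prod ≠ 0 :=
        Multiset.prod_ne_zero (fun h0 => (htprime 0 h0).ne_zero rfl)
      have hIeq : I = (p * q) * t.prod := by
        rw [← hprod, hseq, Multiset.prod_cons, Multiset.prod_cons, mul_assoc]
      have htP : t.prod.IsPrincipal := by
        have hpq0 : p * q ≠ 0 := mul_ne_zero (hprime p hpmem).ne_zero (hprime q hqmem).ne_zero
        have hmem : p * q ∈ nonZeroDivisors (Ideal R) := mem_nonZeroDivisors_of_ne_zero hpq0
        have hmemt : t.prod ∈ nonZeroDivisors (Ideal R) := mem_nonZeroDivisors_of_ne_zero htprod0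
        have hmemI : I ∈ nonZeroDivisors (Ideal R) := mem_nonZeroDivisors_of_ne_zero hI0
        have h1 : ClassGroup.mk0 ⟨(p * q) * t.prod, mul_mem hmem hmemt⟩ = 1 := by
          have heq : (⟨(p * q) * t.prod, mul_mem hmem hmemt⟩ : nonZeroDivisors (Ideal R))
              = ⟨I, hmemI⟩ := Subtype.ext hIeq.symm
          rw [heq, ClassGroup.mk0_eq_one_iff]
          exact hIP
        rw [show (⟨(p * q) * t.prod, mul_mem hmem hmemt⟩ : nonZeroDivisors (Ideal R))
            = ⟨p * q, hmem⟩ * ⟨t.prod, hmemt⟩ from rfl,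
          MonoidHom.map_mul ClassGroup.mk0] at h1
        have h2 : ClassGroup.mk0 ⟨p * q, hmem⟩ = 1 := (ClassGroup.mk0_eq_one_iff hmem).mpr hpq
        rw [h2, one_mul] at h1
        exact (ClassGroup.mk0_eq_one_iff hmemt).mp h1
      obtain ⟨x, hx⟩ := hpq
      obtain ⟨y, hy⟩ := htP
      rw [Ideal.submodule_span_eq] at hx hy
      have hxy : Ideal.span {α} = Ideal.span {x * y} := by
        rw [← Ideal.span_singleton_mul_span_singleton, ← hx, ← hy, ← hI, hIeq]
      have hassoc : Associated α (x * y) :=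
        Ideal.span_singleton_eq_span_singleton.mp hxy
      obtain ⟨u, hu⟩ := hassoc.symm
      have hxunit : ¬IsUnit x := by
        intro hux
        have hU : IsUnit (p * q) := by
          rw [hx]
          exact Ideal.isUnit_iff.mpr (Ideal.span_singleton_eq_top.mpr hux)
        exact (hprime p hpmem).not_isUnit (isUnit_of_dvd_unit (dvd_mul_right p q) hU)
      have hyunit : ¬IsUnit y := by
        intro huy
        obtain ⟨r, hr⟩ := Multiset.card_pos_iff_exists_mem.mp (Multiset.card_pos.mpr ht0)
        have hU : IsUnit t.prod := by
          rw [hy]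
          exact Ideal.isUnit_iff.mpr (Ideal.span_singleton_eq_top.mpr huy)
        exact (htprime r hr).not_isUnit (isUnit_of_dvd_unit (Multiset.dvd_prod hr) hU)
      rcases hα.isUnit_or_isUnit (show α = x * (y * ↑u) by rw [← mul_assoc, ← hu]) with h' | h'
      · exact hxunit h'
      · apply hyunit
        have := h'.mul ((u⁻¹ : Rˣ).isUnit)
        rwa [mul_assoc, Units.mul_inv, mul_one] at this
    have hc2 : Multiset.card s = 2 := by omega
    obtain ⟨p, q, hpq⟩ := Multiset.card_eq_two.mp hc2
    have hpmem : p ∈ s := by rw [hpq]; exact Multiset.mem_cons_self _ _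
    have hqmem : q ∈ s := by rw [hpq]; exact Multiset.mem_cons_of_mem (Multiset.mem_singleton_self _)
    have hIpq : I = p * q := by
      rw [← hprod, hpq, Multiset.insert_eq_cons, Multiset.prod_cons, Multiset.prod_singleton]
    have hpP := hprime p hpmem
    have hqP := hprime q hqmem
    by_cases hpq' : p = q
    · right; left
      exact ⟨p, Ideal.isPrime_of_prime hpP, hpP.ne_zero, hcase p hpmem,
        by rw [hIpq, sq, hpq']⟩
    · right; right
      exact ⟨p, q, hpq', Ideal.isPrime_of_prime hpP, Ideal.isPrime_of_prime hqP,
        hpP.ne_zero, hqP.ne_zero, hcase p hpmem, hcase q hqmem, hIpq⟩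
end

section
/- Let R be a Dedekind domain with trivial or order-2 class group. Then R is half-factorial: whenever α₁⋯αₙ = β₁⋯βₘ with all αᵢ, βⱼ irreducible in R, one has n = m. -/
set_option linter.unusedSectionVars false

open UniqueFactorizationMonoid
open scoped nonZeroDivisors

open scoped Classical in
/-- number of nonprincipal prime ideal factors (with multiplicity) of `span {x}` -/
noncomputable def carlN {R : Type*} [CommRing R] [IsDomain R] [IsDedekindDomain R] (x : R) : ℕ :=
  ((normalizedFactors (Ideal.span {x})).filter (fun I => ¬ Submodule.IsPrincipal I)).card

section Carl

variable {R : Type*} [CommRing R] [IsDomain R] [IsDedekindDomain R]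

lemma carl_span_ne_zero {x : R} (hx : x ≠ 0) : (Ideal.span {x} : Ideal R) ≠ 0 := by
  simpa [Ideal.zero_eq_bot, Ideal.span_singleton_eq_bot] using hx

lemma carl_prime_multiset_prod_eq_one {T : Multiset (Ideal R)}
    (hT : ∀ P ∈ T, Prime P) (h : T.prod = 1) : T = 0 := by
  by_contra h0
  obtain ⟨P, hP⟩ := Multiset.exists_mem_of_ne_zero h0
  exact (hT P hP).not_unit (isUnit_of_dvd_one (h ▸ Multiset.dvd_prod hP))

lemma carl_assoc_of_dvd {p y : R} (hp : Irreducible p)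
    (hd : (Ideal.span {y} : Ideal R) ∣ Ideal.span {p})
    (hne : (Ideal.span {y} : Ideal R) ≠ ⊤) :
    (Ideal.span {y} : Ideal R) = Ideal.span {p} := by
  have hyp : y ∣ p := Ideal.mem_span_singleton.mp
    (Ideal.dvd_iff_le.mp hd (Ideal.mem_span_singleton.mpr dvd_rfl))
  have hyu : ¬ IsUnit y := fun h => hne (Ideal.span_singleton_eq_top.mpr h)
  obtain ⟨c, hc⟩ := hyp
  have hcu : IsUnit c := (hp.isUnit_or_isUnit hc).resolve_left hyu
  exact Ideal.span_singleton_eq_span_singleton.mpr ⟨hcu.unit, by rw [hc]; rfl⟩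

lemma carl_mul_principal (hclass : Nat.card (ClassGroup R) = 1 ∨ Nat.card (ClassGroup R) = 2)
    {P Q : Ideal R} (hP : P ≠ 0) (hQ : Q ≠ 0)
    (hP' : ¬ Submodule.IsPrincipal P) (hQ' : ¬ Submodule.IsPrincipal Q) :
    Submodule.IsPrincipal (P * Q) := by
  have hPm : P ∈ (Ideal R)⁰ := mem_nonZeroDivisors_iff_ne_zero.mpr hP
  have hQm : Q ∈ (Ideal R)⁰ := mem_nonZeroDivisors_iff_ne_zero.mpr hQ
  have h1 : ClassGroup.mk0 ⟨P, hPm⟩ ≠ 1 := fun h => hP' ((ClassGroup.mk0_eq_one_iff hPm).mp h)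
  have h2 : ClassGroup.mk0 ⟨Q, hQm⟩ ≠ 1 := fun h => hQ' ((ClassGroup.mk0_eq_one_iff hQm).mp h)
  rcases hclass with h | h
  · have : Subsingleton (ClassGroup R) := (Nat.card_eq_one_iff_unique.mp h).1
    exact absurd (Subsingleton.elim _ _) h1
  · have key : ClassGroup.mk0 ⟨P, hPm⟩ = ClassGroup.mk0 ⟨Q, hQm⟩ := by
      obtain ⟨x, y, hxy, huniv⟩ := Nat.card_eq_two_iff.mp h
      have mem : ∀ g : ClassGroup R, g = x ∨ g = y := by
        intro g
        have : g ∈ ({x, y} : Set (ClassGroup R)) := huniv ▸ Set.mem_univ g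
        simpa using this
      rcases mem 1 with h1' | h1' <;> rcases mem (ClassGroup.mk0 ⟨P, hPm⟩) with hp' | hp' <;>
        rcases mem (ClassGroup.mk0 ⟨Q, hQm⟩) with hq' | hq' <;>
        first
          | (exact absurd (hp'.trans (h1'.symm)) h1)
          | (exact absurd (hq'.trans (h1'.symm)) h2)
          | (rw [hp', hq'])
    have hmul : ClassGroup.mk0 ⟨P * Q, mul_mem hPm hQm⟩ = 1 := by
      have : (⟨P * Q, mul_mem hPm hQm⟩ : (Ideal R)⁰) = ⟨P, hPm⟩ * ⟨Q, hQm⟩ := rfl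
      rw [this, MonoidHom.map_mul, key, ← sq, ← h]
      exact pow_card_eq_one'
    exact (ClassGroup.mk0_eq_one_iff (mul_mem hPm hQm)).mp hmul

open scoped Classical in
/-- Carlitz's key lemma: for an irreducible element, twice the number of prime factors of
its span equals 2 plus the number of nonprincipal prime factors. -/
lemma carl_irred (hclass : Nat.card (ClassGroup R) = 1 ∨ Nat.card (ClassGroup R) = 2)
    {p : R} (hp : Irreducible p) :
    2 * (normalizedFactors (Ideal.span {p} : Ideal R)).card = 2 + carlN p := by
  have hp0 : p ≠ 0 := hp.ne_zero
  have hsp : (Ideal.span {p} : Ideal R) ≠ 0 := carl_span_ne_zero hp0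
  set S := normalizedFactors (Ideal.span {p} : Ideal R) with hS
  have hprod : S.prod = Ideal.span {p} :=
    associated_iff_eq.mp (prod_normalizedFactors hsp)
  have hprime : ∀ P ∈ S, Prime P := fun P hP => prime_of_normalized_factor P hP
  by_cases hcase : ∃ P ∈ S, Submodule.IsPrincipal P
  · -- principal prime factor: S = {P}
    obtain ⟨P, hPS, hPpr⟩ := hcase
    obtain ⟨y, hy⟩ := hPpr
    have hPtop : P ≠ ⊤ := fun h => (hprime P hPS).not_unit (by rw [Ideal.isUnit_iff]; exact h)
    have hPdvd : P ∣ Ideal.span {p} := hprod ▸ Multiset.dvd_prod hPS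
    have hy' : P = Ideal.span {y} := hy
    have hPspan : P = Ideal.span {p} := by
      rw [hy']
      exact carl_assoc_of_dvd hp (hy' ▸ hPdvd) (hy' ▸ hPtop)
    obtain ⟨T, hT⟩ := Multiset.exists_cons_of_mem hPS
    have hT0 : T = 0 := by
      apply carl_prime_multiset_prod_eq_one (fun Q hQ => hprime Q (hT ▸ Multiset.mem_cons_of_mem hQ))
      have : P * T.prod = P * 1 := by
        rw [mul_one]
        conv_rhs => rw [hPspan, ← hprod, hT, Multiset.prod_cons]
      exact mul_left_cancel₀ (hprime P hPS).ne_zero this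
    have hScard : S = {P} := by rw [hT, hT0]; rfl
    have hfilter : (S.filter (fun I => ¬ Submodule.IsPrincipal I)) = 0 := by
      rw [hScard, Multiset.filter_singleton, if_neg (not_not.mpr ⟨⟨y, hy⟩⟩)]
      rfl
    rw [carlN, ← hS, hfilter, hScard]
    simp
  · -- all prime factors nonprincipal
    push_neg at hcase
    have hfilter : (S.filter (fun I => ¬ Submodule.IsPrincipal I)) = S :=
      Multiset.filter_eq_self.mpr hcase
    have hS0 : S ≠ 0 := by
      intro h
      rw [h, Multiset.prod_zero, Ideal.one_eq_top] at hprod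
      exact hp.not_isUnit (Ideal.span_singleton_eq_top.mp hprod.symm)
    obtain ⟨P, hPS⟩ := Multiset.exists_mem_of_ne_zero hS0
    obtain ⟨T, hT⟩ := Multiset.exists_cons_of_mem hPS
    have hT0 : T ≠ 0 := by
      intro h
      rw [h] at hT
      have : P = Ideal.span {p} := by
        rw [← hprod, hT, Multiset.prod_cons, Multiset.prod_zero, mul_one]
      exact hcase P hPS (this ▸ ⟨p, rfl⟩)
    obtain ⟨Q, hQT⟩ := Multiset.exists_mem_of_ne_zero hT0
    obtain ⟨T', hT'⟩ := Multiset.exists_cons_of_mem hQT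
    have hQS : Q ∈ S := hT ▸ Multiset.mem_cons_of_mem hQT
    have hPQpr : Submodule.IsPrincipal (P * Q) :=
      carl_mul_principal hclass (hprime P hPS).ne_zero (hprime Q hQS).ne_zero
        (hcase P hPS) (hcase Q hQS)
    obtain ⟨y, hy⟩ := hPQpr
    have hy' : P * Q = Ideal.span {y} := hy
    have hPQtop : P * Q ≠ ⊤ := by
      intro h
      have : (⊤ : Ideal R) ≤ Q := h ▸ Ideal.mul_le_right
      exact (hprime Q hQS).not_unit (Ideal.isUnit_iff.mpr (top_le_iff.mp this))
    have hSplit : S.prod = (P * Q) * T'.prod := by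
      rw [hT, hT', Multiset.prod_cons, Multiset.prod_cons, mul_assoc]
    have hPQdvd : P * Q ∣ Ideal.span {p} := ⟨T'.prod, by rw [← hprod, hSplit]⟩
    have hPQspan : P * Q = Ideal.span {p} := by
      rw [hy']
      exact carl_assoc_of_dvd hp (hy' ▸ hPQdvd) (hy' ▸ hPQtop)
    have hT'0 : T' = 0 := by
      apply carl_prime_multiset_prod_eq_one
        (fun I hI => hprime I (hT ▸ Multiset.mem_cons_of_mem (hT' ▸ Multiset.mem_cons_of_mem hI)))
      have : (P * Q) * T'.prod = (P * Q) * 1 := by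
        rw [mul_one]
        conv_rhs => rw [hPQspan, ← hprod, hSplit]
      exact mul_left_cancel₀
        (mul_ne_zero (hprime P hPS).ne_zero (hprime Q hQS).ne_zero) this
    have hScard : S.card = 2 := by
      rw [hT, hT', hT'0]
      rfl
    rw [carlN, ← hS, hfilter, hScard]

open scoped Classical in
lemma carl_add {x y : R} (hx : x ≠ 0) (hy : y ≠ 0) :
    normalizedFactors (Ideal.span {x * y} : Ideal R)
      = normalizedFactors (Ideal.span {x} : Ideal R)
        + normalizedFactors (Ideal.span {y} : Ideal R) := by
  rw [← Ideal.span_singleton_mul_span_singleton]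
  exact normalizedFactors_mul (carl_span_ne_zero hx) (carl_span_ne_zero hy)

open scoped Classical in
lemma carl_main (hclass : Nat.card (ClassGroup R) = 1 ∨ Nat.card (ClassGroup R) = 2) :
    ∀ (n : ℕ) (α : Fin n → R), (∀ i, Irreducible (α i)) →
      2 * (normalizedFactors (Ideal.span {∏ i, α i} : Ideal R)).card
        = 2 * n + carlN (∏ i, α i) := by
  intro n
  induction n with
  | zero =>
    intro α _
    simp [carlN, Ideal.span_singleton_one, Ideal.one_eq_top, ← Ideal.one_eq_top,
      normalizedFactors_one]
  | succ k ih =>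
    intro α hα
    have hx : α 0 ≠ 0 := (hα 0).ne_zero
    have hy : (∏ i : Fin k, α i.succ) ≠ 0 :=
      Finset.prod_ne_zero_iff.mpr (fun i _ => (hα i.succ).ne_zero)
    have hsplit : (∏ i, α i) = α 0 * ∏ i : Fin k, α i.succ := Fin.prod_univ_succ α
    have hadd := carl_add (R := R) hx hy
    have h1 := carl_irred hclass (hα 0)
    have h2 := ih (fun i => α i.succ) (fun i => hα i.succ)
    rw [hsplit]
    rw [carlN, hadd, Multiset.filter_add, Multiset.card_add, Multiset.card_add]
    rw [carlN] at h1 h2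
    beta_reduce at h2
    omega

end Carl

theorem class_number_le_two_half_factorial
    {R : Type*} [CommRing R] [IsDomain R] [IsDedekindDomain R]
    (hclass : Nat.card (ClassGroup R) = 1 ∨ Nat.card (ClassGroup R) = 2)
    (n m : ℕ) (α : Fin n → R) (β : Fin m → R)
    (hα : ∀ i, Irreducible (α i)) (hβ : ∀ j, Irreducible (β j))
    (heq : ∏ i, α i = ∏ j, β j) :
    n = m := by
  have h1 := carl_main hclass n α hα
  have h2 := carl_main hclass m β hβ
  rw [heq] at h1
  omega
end

section
/- Let R be a Dedekind domain in which every ideal class contains a nonzero prime ideal, and suppose the class group has order greater than 2. Then there exist irreducible elements α₁, α₂, β₁, β₂, β₃ of R and a unit u with α₁α₂ = u·β₁β₂β₃. In particular R is not half-factorial. -/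
open scoped nonZeroDivisors

section Aux

variable {R : Type*} [CommRing R] [IsDomain R] [IsDedekindDomain R]

lemma aux_dvd_prime {S J : Ideal R} (hS : S.IsPrime) (hS0 : S ≠ ⊥) (h : J ∣ S) :
    J = ⊤ ∨ J = S := by
  have hle : S ≤ J := Ideal.le_of_dvd h
  rcases hle.lt_or_eq with h' | h'
  · exact Or.inl ((hS.isMaximal hS0).1.2 _ h')
  · exact Or.inr h'.symm

lemma aux_irred2 {P Q : Ideal R} {x : R} (hP : P.IsPrime) (hP0 : P ≠ ⊥)
    (hQ : Q.IsPrime) (hQ0 : Q ≠ ⊥)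
    (hPp : ¬ Submodule.IsPrincipal P) (hQp : ¬ Submodule.IsPrincipal Q)
    (hx : P * Q = Ideal.span {x}) : Irreducible x := by
  have hPne : P ≠ (0 : Ideal R) := hP0
  have hprodne : P * Q ≠ (0 : Ideal R) := mul_ne_zero hP0 hQ0
  constructor
  · intro hu
    rw [Ideal.span_singleton_eq_top.mpr hu, ← Ideal.one_eq_top] at hx
    exact hP.ne_top (Ideal.isUnit_iff.mp (IsUnit.of_mul_eq_one _ hx))
  · rintro y z rfl
    have hyz : Ideal.span {y} * Ideal.span {z} = P * Q := by
      rw [Ideal.span_singleton_mul_span_singleton, hx]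
    have hdvd : Ideal.span {y} ∣ P * Q := ⟨Ideal.span {z}, hyz.symm⟩
    rcases (Ideal.prime_of_isPrime hP0 hP).left_dvd_or_dvd_right_of_dvd_mul hdvd with
      hPJ | hJQ
    · obtain ⟨J₁, hJ₁⟩ := hPJ
      rw [hJ₁, mul_dvd_mul_iff_left hPne] at hdvd
      rcases aux_dvd_prime hQ hQ0 hdvd with hT | hE
      · rw [hT, Ideal.mul_top] at hJ₁
        exact absurd ⟨⟨y, hJ₁.symm⟩⟩ hPp
      · rw [hE] at hJ₁
        have h1 : Ideal.span {y} * Ideal.span {z} = Ideal.span {y} * 1 := by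
          rw [hyz, ← hJ₁, mul_one]
        have h2 : Ideal.span {z} = 1 :=
          mul_left_cancel₀ (by rw [hJ₁]; exact hprodne) h1
        rw [Ideal.one_eq_top] at h2
        exact Or.inr (Ideal.span_singleton_eq_top.mp h2)
    · rcases aux_dvd_prime hQ hQ0 hJQ with hT | hE
      · exact Or.inl (Ideal.span_singleton_eq_top.mp hT)
      · exact absurd ⟨⟨y, hE.symm⟩⟩ hQp

lemma aux_irred3 {P Q S : Ideal R} {x : R} (hP : P.IsPrime) (hP0 : P ≠ ⊥)
    (hQ : Q.IsPrime) (hQ0 : Q ≠ ⊥) (hS : S.IsPrime) (hS0 : S ≠ ⊥)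
    (hPp : ¬ Submodule.IsPrincipal P) (hQp : ¬ Submodule.IsPrincipal Q)
    (hSp : ¬ Submodule.IsPrincipal S)
    (hPQ : ¬ Submodule.IsPrincipal (P * Q)) (hPS : ¬ Submodule.IsPrincipal (P * S))
    (hQS : ¬ Submodule.IsPrincipal (Q * S))
    (hx : P * Q * S = Ideal.span {x}) : Irreducible x := by
  have hPne : P ≠ (0 : Ideal R) := hP0
  have hQne : Q ≠ (0 : Ideal R) := hQ0
  have hprodne : P * Q * S ≠ (0 : Ideal R) := mul_ne_zero (mul_ne_zero hP0 hQ0) hS0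
  constructor
  · intro hu
    rw [Ideal.span_singleton_eq_top.mpr hu, ← Ideal.one_eq_top, mul_assoc] at hx
    exact hP.ne_top (Ideal.isUnit_iff.mp (IsUnit.of_mul_eq_one _ hx))
  · rintro y z rfl
    have hyz : Ideal.span {y} * Ideal.span {z} = P * Q * S := by
      rw [Ideal.span_singleton_mul_span_singleton, hx]
    have hdvd : Ideal.span {y} ∣ P * (Q * S) := ⟨Ideal.span {z}, by rw [← mul_assoc, hyz]⟩
    rcases (Ideal.prime_of_isPrime hP0 hP).left_dvd_or_dvd_right_of_dvd_mul hdvd with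
      hPJ | hJQS
    · obtain ⟨J₁, hJ₁⟩ := hPJ
      rw [hJ₁, mul_dvd_mul_iff_left hPne] at hdvd
      rcases (Ideal.prime_of_isPrime hQ0 hQ).left_dvd_or_dvd_right_of_dvd_mul hdvd with
        hQJ | hJS
      · obtain ⟨J₂, hJ₂⟩ := hQJ
        rw [hJ₂, mul_dvd_mul_iff_left hQne] at hdvd
        rcases aux_dvd_prime hS hS0 hdvd with hT | hE
        · rw [hT, Ideal.mul_top] at hJ₂
          rw [hJ₂] at hJ₁
          exact absurd ⟨⟨y, hJ₁.symm⟩⟩ hPQ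
        · rw [hE] at hJ₂
          have hy' : Ideal.span {y} = P * Q * S := by rw [hJ₁, hJ₂, mul_assoc]
          have h1 : Ideal.span {y} * Ideal.span {z} = Ideal.span {y} * 1 := by
            rw [hyz, ← hy', mul_one]
          have h2 : Ideal.span {z} = 1 :=
            mul_left_cancel₀ (by rw [hy']; exact hprodne) h1
          rw [Ideal.one_eq_top] at h2
          exact Or.inr (Ideal.span_singleton_eq_top.mp h2)
      · rcases aux_dvd_prime hS hS0 hJS with hT | hE
        · rw [hT, Ideal.mul_top] at hJ₁
          exact absurd ⟨⟨y, hJ₁.symm⟩⟩ hPp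
        · rw [hE] at hJ₁
          exact absurd ⟨⟨y, hJ₁.symm⟩⟩ hPS
    · rcases (Ideal.prime_of_isPrime hQ0 hQ).left_dvd_or_dvd_right_of_dvd_mul hJQS with
        hQJ | hJS
      · obtain ⟨J₁, hJ₁⟩ := hQJ
        rw [hJ₁, mul_dvd_mul_iff_left hQne] at hJQS
        rcases aux_dvd_prime hS hS0 hJQS with hT | hE
        · rw [hT, Ideal.mul_top] at hJ₁
          exact absurd ⟨⟨y, hJ₁.symm⟩⟩ hQp
        · rw [hE] at hJ₁
          exact absurd ⟨⟨y, hJ₁.symm⟩⟩ hQS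
      · rcases aux_dvd_prime hS hS0 hJS with hT | hE
        · exact Or.inl (Ideal.span_singleton_eq_top.mp hT)
        · exact absurd ⟨⟨y, hE.symm⟩⟩ hSp

lemma aux_group {G : Type*} [Group G]
    (h : ∃ a b c : G, a ≠ b ∧ a ≠ c ∧ b ≠ c) :
    ∃ a b : G, a ≠ 1 ∧ b ≠ 1 ∧ a * b ≠ 1 := by
  obtain ⟨x, y, z, hxy, hxz, hyz⟩ := h
  have hpq : ∃ p q : G, p ≠ 1 ∧ q ≠ 1 ∧ p ≠ q := by
    by_cases hx : x = 1
    · exact ⟨y, z, by rw [← hx]; exact hxy.symm, by rw [← hx]; exact hxz.symm, hyz⟩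
    · by_cases hy : y = 1
      · exact ⟨x, z, hx, by rw [← hy]; exact hyz.symm, hxz⟩
      · exact ⟨x, y, hx, hy, hxy⟩
  obtain ⟨p, q, hp, hq, hpqne⟩ := hpq
  by_cases h1 : p * q = 1
  · refine ⟨p, p, hp, hp, fun hpp => hpqne ?_⟩
    have h2 : p⁻¹ = q := inv_eq_of_mul_eq_one_right h1
    have h3 : p⁻¹ = p := inv_eq_of_mul_eq_one_right hpp
    rw [← h2, h3]
  · exact ⟨p, q, hp, hq, h1⟩

lemma aux_mk0_mul (I J : (Ideal R)⁰) :
    ClassGroup.mk0 (⟨(I : Ideal R) * (J : Ideal R), mul_mem I.2 J.2⟩ : (Ideal R)⁰) =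
      ClassGroup.mk0 I * ClassGroup.mk0 J :=
  MonoidHom.map_mul ClassGroup.mk0 I J

end Aux

theorem class_number_gt_two_not_half_factorial
    {R : Type*} [CommRing R] [IsDomain R] [IsDedekindDomain R]
    (hprimes : ∀ c : ClassGroup R, ∃ (𝔭 : Ideal R) (h𝔭 : 𝔭 ∈ nonZeroDivisors (Ideal R)),
      𝔭.IsPrime ∧ 𝔭 ≠ ⊥ ∧ ClassGroup.mk0 ⟨𝔭, h𝔭⟩ = c)
    (hbig : ∃ a b c : ClassGroup R, a ≠ b ∧ a ≠ c ∧ b ≠ c) :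
    ∃ (α₁ α₂ β₁ β₂ β₃ u : R), Irreducible α₁ ∧ Irreducible α₂ ∧
      Irreducible β₁ ∧ Irreducible β₂ ∧ Irreducible β₃ ∧ IsUnit u ∧
      α₁ * α₂ = u * (β₁ * β₂ * β₃) := by
  obtain ⟨a, b, ha, hb, hab⟩ := aux_group hbig
  obtain ⟨P, hPm, hPpr, hP0, hPc⟩ := hprimes a
  obtain ⟨Q, hQm, hQpr, hQ0, hQc⟩ := hprimes b
  obtain ⟨S, hSm, hSpr, hS0, hSc⟩ := hprimes (a * b)⁻¹
  obtain ⟨P', hP'm, hP'pr, hP'0, hP'c⟩ := hprimes a⁻¹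
  obtain ⟨Q', hQ'm, hQ'pr, hQ'0, hQ'c⟩ := hprimes b⁻¹
  obtain ⟨S', hS'm, hS'pr, hS'0, hS'c⟩ := hprimes (a * b)
  have npP : ¬ Submodule.IsPrincipal P := fun h =>
    ha (hPc ▸ (ClassGroup.mk0_eq_one_iff hPm).mpr h)
  have npQ : ¬ Submodule.IsPrincipal Q := fun h =>
    hb (hQc ▸ (ClassGroup.mk0_eq_one_iff hQm).mpr h)
  have npS : ¬ Submodule.IsPrincipal S := fun h => by
    have := hSc ▸ (ClassGroup.mk0_eq_one_iff hSm).mpr h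
    exact hab (by rwa [inv_eq_one] at this)
  have npP' : ¬ Submodule.IsPrincipal P' := fun h => by
    have := hP'c ▸ (ClassGroup.mk0_eq_one_iff hP'm).mpr h
    exact ha (by rwa [inv_eq_one] at this)
  have npQ' : ¬ Submodule.IsPrincipal Q' := fun h => by
    have := hQ'c ▸ (ClassGroup.mk0_eq_one_iff hQ'm).mpr h
    exact hb (by rwa [inv_eq_one] at this)
  have npS' : ¬ Submodule.IsPrincipal S' := fun h =>
    hab (hS'c ▸ (ClassGroup.mk0_eq_one_iff hS'm).mpr h)
  have npPQ : ¬ Submodule.IsPrincipal (P * Q) := fun h => by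
    have h1 := (ClassGroup.mk0_eq_one_iff (mul_mem hPm hQm)).mpr h
    rw [aux_mk0_mul ⟨P, hPm⟩ ⟨Q, hQm⟩, hPc, hQc] at h1
    exact hab h1
  have npPS : ¬ Submodule.IsPrincipal (P * S) := fun h => by
    have h1 := (ClassGroup.mk0_eq_one_iff (mul_mem hPm hSm)).mpr h
    rw [aux_mk0_mul ⟨P, hPm⟩ ⟨S, hSm⟩, hPc, hSc] at h1
    apply hb
    have he : a * (a * b)⁻¹ = b⁻¹ := by rw [mul_inv, ← mul_assoc, mul_inv_cancel, one_mul]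
    rw [he, inv_eq_one] at h1
    exact h1
  have npQS : ¬ Submodule.IsPrincipal (Q * S) := fun h => by
    have h1 := (ClassGroup.mk0_eq_one_iff (mul_mem hQm hSm)).mpr h
    rw [aux_mk0_mul ⟨Q, hQm⟩ ⟨S, hSm⟩, hQc, hSc] at h1
    apply ha
    have he : b * (a * b)⁻¹ = a⁻¹ := by rw [mul_comm a b, mul_inv, ← mul_assoc, mul_inv_cancel, one_mul]
    rw [he, inv_eq_one] at h1
    exact h1
  have npP'Q' : ¬ Submodule.IsPrincipal (P' * Q') := fun h => by
    have h1 := (ClassGroup.mk0_eq_one_iff (mul_mem hP'm hQ'm)).mpr h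
    rw [aux_mk0_mul ⟨P', hP'm⟩ ⟨Q', hQ'm⟩, hP'c, hQ'c] at h1
    apply hab
    have he : a⁻¹ * b⁻¹ = (a * b)⁻¹ := (mul_inv a b).symm
    rw [he, inv_eq_one] at h1
    exact h1
  have npP'S' : ¬ Submodule.IsPrincipal (P' * S') := fun h => by
    have h1 := (ClassGroup.mk0_eq_one_iff (mul_mem hP'm hS'm)).mpr h
    rw [aux_mk0_mul ⟨P', hP'm⟩ ⟨S', hS'm⟩, hP'c, hS'c] at h1
    apply hb
    have he : a⁻¹ * (a * b) = b := by rw [← mul_assoc, inv_mul_cancel, one_mul]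
    rwa [he] at h1
  have npQ'S' : ¬ Submodule.IsPrincipal (Q' * S') := fun h => by
    have h1 := (ClassGroup.mk0_eq_one_iff (mul_mem hQ'm hS'm)).mpr h
    rw [aux_mk0_mul ⟨Q', hQ'm⟩ ⟨S', hS'm⟩, hQ'c, hS'c] at h1
    apply ha
    have he : b⁻¹ * (a * b) = a := by rw [mul_comm a b, ← mul_assoc, inv_mul_cancel, one_mul]
    rwa [he] at h1
  have pPQS : Submodule.IsPrincipal (P * Q * S) := by
    rw [← ClassGroup.mk0_eq_one_iff (mul_mem (mul_mem hPm hQm) hSm)]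
    have := aux_mk0_mul (R := R) ⟨P * Q, mul_mem hPm hQm⟩ ⟨S, hSm⟩
    rw [this, aux_mk0_mul ⟨P, hPm⟩ ⟨Q, hQm⟩, hPc, hQc, hSc]
    group
  have pP'Q'S' : Submodule.IsPrincipal (P' * Q' * S') := by
    rw [← ClassGroup.mk0_eq_one_iff (mul_mem (mul_mem hP'm hQ'm) hS'm)]
    have := aux_mk0_mul (R := R) ⟨P' * Q', mul_mem hP'm hQ'm⟩ ⟨S', hS'm⟩
    rw [this, aux_mk0_mul ⟨P', hP'm⟩ ⟨Q', hQ'm⟩, hP'c, hQ'c, hS'c, ← mul_inv,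
      inv_mul_cancel]
  have pPP' : Submodule.IsPrincipal (P * P') := by
    rw [← ClassGroup.mk0_eq_one_iff (mul_mem hPm hP'm)]
    rw [aux_mk0_mul ⟨P, hPm⟩ ⟨P', hP'm⟩, hPc, hP'c]
    group
  have pQQ' : Submodule.IsPrincipal (Q * Q') := by
    rw [← ClassGroup.mk0_eq_one_iff (mul_mem hQm hQ'm)]
    rw [aux_mk0_mul ⟨Q, hQm⟩ ⟨Q', hQ'm⟩, hQc, hQ'c]
    group
  have pSS' : Submodule.IsPrincipal (S * S') := by
    rw [← ClassGroup.mk0_eq_one_iff (mul_mem hSm hS'm)]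
    rw [aux_mk0_mul ⟨S, hSm⟩ ⟨S', hS'm⟩, hSc, hS'c]
    group
  obtain ⟨α₁, hα₁⟩ := pPQS.principal
  obtain ⟨α₂, hα₂⟩ := pP'Q'S'.principal
  obtain ⟨β₁, hβ₁⟩ := pPP'.principal
  obtain ⟨β₂, hβ₂⟩ := pQQ'.principal
  obtain ⟨β₃, hβ₃⟩ := pSS'.principal
  rw [Ideal.submodule_span_eq] at hα₁ hα₂ hβ₁ hβ₂ hβ₃
  have irr1 : Irreducible α₁ :=
    aux_irred3 hPpr hP0 hQpr hQ0 hSpr hS0 npP npQ npS npPQ npPS npQS hα₁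
  have irr2 : Irreducible α₂ :=
    aux_irred3 hP'pr hP'0 hQ'pr hQ'0 hS'pr hS'0 npP' npQ' npS' npP'Q' npP'S' npQ'S' hα₂
  have irrb1 : Irreducible β₁ := aux_irred2 hPpr hP0 hP'pr hP'0 npP npP' hβ₁
  have irrb2 : Irreducible β₂ := aux_irred2 hQpr hQ0 hQ'pr hQ'0 npQ npQ' hβ₂
  have irrb3 : Irreducible β₃ := aux_irred2 hSpr hS0 hS'pr hS'0 npS npS' hβ₃
  have key : Ideal.span {α₁ * α₂} = Ideal.span {β₁ * β₂ * β₃} := by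
    rw [← Ideal.span_singleton_mul_span_singleton, ← hα₁, ← hα₂,
      ← Ideal.span_singleton_mul_span_singleton, ← Ideal.span_singleton_mul_span_singleton,
      ← hβ₁, ← hβ₂, ← hβ₃]
    ring
  have hassoc : Associated (α₁ * α₂) (β₁ * β₂ * β₃) :=
    Ideal.span_singleton_eq_span_singleton.mp key
  obtain ⟨u, hu⟩ := hassoc
  refine ⟨α₁, α₂, β₁, β₂, β₃, ((u⁻¹ : Rˣ) : R), irr1, irr2, irrb1, irrb2, irrb3,
    Units.isUnit _, ?_⟩
  rw [← hu, mul_comm _ ((u : R)), ← mul_assoc]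
  simp
end

section
/- Let R be a Dedekind domain with finite class group and x a nonzero nonunit. If x = α₁⋯α_k is a product of k irreducibles, then every factorization of x into irreducibles has at most k·D(G) factors, where D(G) is the Davenport constant of the class group G. In particular every length set L(x) is finite. -/
/-- The Davenport constant of a commutative group `G`: the supremum of lengths of
minimal zero-(product-one-)sequences over `G`. -/
noncomputable def davenportConstant (G : Type*) [CommGroup G] : ℕ :=
  sSup {n : ℕ | ∃ g : Fin n → G, ∏ i, g i = 1 ∧
    ∀ S : Finset (Fin n), S.Nonempty → S ≠ Finset.univ → ∏ i ∈ S, g i ≠ 1}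

/-- The set of lengths of factorizations of `x` into irreducibles. -/
def lengthSet {R : Type*} [CommMonoidWithZero R] (x : R) : Set ℕ :=
  {k : ℕ | ∃ α : Fin k → R, (∀ i, Irreducible (α i)) ∧ x = ∏ i, α i}

/-!
Count the prime ideal factors `Ω(y)` of `(y)`, which is additive on products. An irreducible `β`
has `Ω(β) ≥ 1`, and an irreducible `α` has `Ω(α) ≤ D(G)`: the classes of the primes dividing `(α)`
form a minimal product-one sequence in the class group. Hence any factorization of `x` into `m`
irreducibles gives `m ≤ Ω(x) ≤ k · D(G)`. `D(G) ≤ |G|` is finite because a sequence longer than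
`|G|` has two equal prefix products.
-/

open UniqueFactorizationMonoid Finset
open scoped nonZeroDivisors

section Davenport

variable {G : Type*} [CommGroup G] [Finite G]

theorem exists_nonempty_ne_univ_prod_eq_one {n : ℕ} (g : Fin n → G) (hn : Nat.card G < n) :
    ∃ S : Finset (Fin n), S.Nonempty ∧ S ≠ univ ∧ ∏ i ∈ S, g i = 1 := by
  have := Fintype.ofFinite G
  obtain ⟨a, b, hab, hp⟩ := Fintype.exists_ne_map_eq_of_card_lt
    (fun j : Fin n => ∏ i ∈ Iio j, g i) (by simpa [Nat.card_eq_fintype_card] using hn)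
  wlog hlt : a < b generalizing a b
  · exact this b a hab.symm hp.symm (hab.lt_or_gt.resolve_left hlt)
  have hb : b ∉ Iio b \ Iio a := by simp
  refine ⟨Iio b \ Iio a, ⟨a, by simpa using hlt⟩, fun h => hb (h ▸ mem_univ b), ?_⟩
  have hsplit := prod_sdiff (f := g) (Iio_subset_Iio hlt.le)
  rwa [← hp, mul_eq_right] at hsplit

theorem davenportConstant_bddAbove :
    BddAbove {n : ℕ | ∃ g : Fin n → G, ∏ i, g i = 1 ∧
      ∀ S : Finset (Fin n), S.Nonempty → S ≠ univ → ∏ i ∈ S, g i ≠ 1} := by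
  refine ⟨Nat.card G, fun n ⟨g, _, hmin⟩ => not_lt.1 fun hn => ?_⟩
  obtain ⟨S, hS, hSu, hS1⟩ := exists_nonempty_ne_univ_prod_eq_one g hn
  exact hmin S hS hSu hS1

theorem le_davenportConstant {n : ℕ} (g : Fin n → G) (hg : ∏ i, g i = 1)
    (hmin : ∀ S : Finset (Fin n), S.Nonempty → S ≠ univ → ∏ i ∈ S, g i ≠ 1) :
    n ≤ davenportConstant G :=
  le_csSup davenportConstant_bddAbove ⟨g, hg, hmin⟩

end Davenport

section Factorization

variable {M : Type*} [CommMonoidWithZero M] [NormalizationMonoid M]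
  [UniqueFactorizationMonoid M]

theorem exists_fin_prime_prod_eq [Subsingleton Mˣ] {a : M} (ha : a ≠ 0) :
    ∃ (n : ℕ) (F : Fin n → M), n = (normalizedFactors a).card ∧ (∀ i, Prime (F i)) ∧
      ∏ i, F i = a := by
  refine ⟨_, fun i => (normalizedFactors a).toList[i.1], by simp, fun i => ?_, ?_⟩
  · exact prime_of_normalized_factor _ (Multiset.mem_toList.1 (List.getElem_mem _))
  · rw [Fin.prod_univ_getElem, Multiset.prod_toList]
    exact associated_iff_eq.1 (prod_normalizedFactors ha)

theorem card_normalizedFactors_prod {ι : Type*} (s : Finset ι) {f : ι → M}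
    (hf : ∀ i ∈ s, f i ≠ 0) :
    (normalizedFactors (∏ i ∈ s, f i)).card = ∑ i ∈ s, (normalizedFactors (f i)).card := by
  rw [prod_eq_multiset_prod, normalizedFactors_multiset_prod _ (by simpa [eq_comm] using hf),
    Multiset.map_map, ← Multiset.card_sum]
  rfl

end Factorization

namespace Ideal

theorem eq_top_or_eq_top_of_mul_eq_span_irreducible {R : Type*} [CommRing R] [IsDomain R]
    {a : R} (ha : Irreducible a) {I J : Ideal R} (hI : I.IsPrincipal) (hJ : J.IsPrincipal)
    (hIJ : I * J = span {a}) : I = ⊤ ∨ J = ⊤ := by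
  obtain ⟨b, rfl⟩ := hI
  obtain ⟨c, rfl⟩ := hJ
  rw [submodule_span_eq, submodule_span_eq, span_singleton_mul_span_singleton,
    span_singleton_eq_span_singleton] at hIJ
  simpa only [span_singleton_eq_top] using (hIJ.symm.irreducible ha).isUnit_or_isUnit rfl

variable {R : Type*} [CommRing R] [IsDedekindDomain R]

/-- A proper nonempty subproduct of the prime factors with trivial class would split `(a)` into
two proper principal factors. -/
theorem card_normalizedFactors_span_le_davenportConstant [Finite (ClassGroup R)] {a : R}
    (ha : Irreducible a) :
    (normalizedFactors (span {a})).card ≤ davenportConstant (ClassGroup R) := by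
  obtain ⟨n, P, hn, hP, hPa⟩ :=
    exists_fin_prime_prod_eq (a := span {a}) (by simpa using ha.ne_zero)
  let P' : Fin n → (Ideal R)⁰ := fun i => ⟨P i, mem_nonZeroDivisors_of_ne_zero (hP i).ne_zero⟩
  have hclass (S : Finset (Fin n)) :
      ∏ i ∈ S, ClassGroup.mk0 (P' i) = 1 ↔ (∏ i ∈ S, P i).IsPrincipal := by
    change _ ↔ (∏ i ∈ S, (P' i : Ideal R)).IsPrincipal
    rw [← map_prod, ← Submonoid.coe_finsetProd]
    exact ClassGroup.mk0_eq_one_iff _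
  have hprod_ne_top {S : Finset (Fin n)} (hS : S.Nonempty) : ∏ i ∈ S, P i ≠ ⊤ := by
    obtain ⟨i, hi⟩ := hS
    rw [ne_eq, ← isUnit_iff]
    exact fun h => (hP i).not_isUnit (isUnit_of_dvd_unit (dvd_prod_of_mem P hi) h)
  have hP1 : ∏ i, ClassGroup.mk0 (P' i) = 1 := (hclass univ).2 (hPa ▸ ⟨a, rfl⟩)
  rw [← hn]
  refine le_davenportConstant _ hP1 fun S hS hSu hS1 => ?_
  have hSc1 : ∏ i ∈ Sᶜ, ClassGroup.mk0 (P' i) = 1 := by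
    simpa [hS1, hP1] using prod_mul_prod_compl S fun i => ClassGroup.mk0 (P' i)
  have hSc : Sᶜ.Nonempty := (compl_ne_univ_iff_nonempty Sᶜ).1 (by rwa [compl_compl])
  rcases eq_top_or_eq_top_of_mul_eq_span_irreducible ha ((hclass S).1 hS1) ((hclass Sᶜ).1 hSc1)
    (by rw [prod_mul_prod_compl, hPa]) with h | h
  · exact hprod_ne_top hS h
  · exact hprod_ne_top hSc h

theorem card_normalizedFactors_span_prod {m : ℕ} {β : Fin m → R} (hβ : ∀ j, β j ≠ 0) :
    (normalizedFactors (span {∏ j, β j})).card = ∑ j, (normalizedFactors (span {β j})).card := by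
  rw [← prod_span_singleton, card_normalizedFactors_prod _ (fun j _ => by simpa using hβ j)]

theorem card_normalizedFactors_span_pos {b : R} (hb : Irreducible b) :
    0 < (normalizedFactors (span {b})).card := by
  rw [Multiset.card_pos, ← pos_iff_ne_zero, normalizedFactors_pos _ (by simpa using hb.ne_zero),
    isUnit_iff, span_singleton_eq_top]
  exact hb.not_isUnit

theorem le_card_normalizedFactors_span_prod {m : ℕ} {β : Fin m → R}
    (hβ : ∀ j, Irreducible (β j)) : m ≤ (normalizedFactors (span {∏ j, β j})).card := by
  rw [card_normalizedFactors_span_prod fun j => (hβ j).ne_zero]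
  have := card_nsmul_le_sum univ _ 1 fun j _ => card_normalizedFactors_span_pos (hβ j)
  rwa [card_univ, Fintype.card_fin, smul_eq_mul, mul_one] at this

theorem card_normalizedFactors_span_prod_le [Finite (ClassGroup R)] {k : ℕ} {α : Fin k → R}
    (hα : ∀ i, Irreducible (α i)) :
    (normalizedFactors (span {∏ i, α i})).card ≤ k * davenportConstant (ClassGroup R) := by
  rw [card_normalizedFactors_span_prod fun i => (hα i).ne_zero]
  simpa using sum_le_card_nsmul univ _ _ fun i _ =>
    card_normalizedFactors_span_le_davenportConstant (hα i)

end Ideal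

theorem lengths_bounded_by_davenport_general
    {R : Type*} [CommRing R] [IsDedekindDomain R]
    [Finite (ClassGroup R)]
    (x : R)
    (k : ℕ) (α : Fin k → R) (hα : ∀ i, Irreducible (α i)) (hfac : x = ∏ i, α i) :
    (∀ (m : ℕ) (β : Fin m → R), (∀ j, Irreducible (β j)) → x = ∏ j, β j →
        m ≤ k * davenportConstant (ClassGroup R)) ∧
      (lengthSet x).Finite := by
  have hbound (m : ℕ) (β : Fin m → R) (hβ : ∀ j, Irreducible (β j)) (hxβ : x = ∏ j, β j) :
      m ≤ k * davenportConstant (ClassGroup R) :=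
    calc m ≤ (normalizedFactors (Ideal.span {x})).card :=
          hxβ ▸ Ideal.le_card_normalizedFactors_span_prod hβ
      _ ≤ k * davenportConstant (ClassGroup R) :=
          hfac ▸ Ideal.card_normalizedFactors_span_prod_le hα
  exact ⟨hbound, (Set.finite_Iic _).subset fun m ⟨β, hβ, hxβ⟩ => hbound m β hβ hxβ⟩

theorem lengths_bounded_by_davenport
    {R : Type*} [CommRing R] [IsDomain R] [IsDedekindDomain R]
    [Finite (ClassGroup R)]
    (x : R) (hx0 : x ≠ 0) (hxu : ¬IsUnit x)
    (k : ℕ) (α : Fin k → R) (hα : ∀ i, Irreducible (α i)) (hfac : x = ∏ i, α i) :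
    (∀ (m : ℕ) (β : Fin m → R), (∀ j, Irreducible (β j)) → x = ∏ j, β j →
        m ≤ k * davenportConstant (ClassGroup R)) ∧
      (lengthSet x).Finite :=
  lengths_bounded_by_davenport_general x k α hα hfac
end

section
/- Let R be a Dedekind domain with class group of order 2 and let α be an irreducible element of R that is not prime. Then ω(α) = 2: whenever α divides a product a₁⋯a_t of irreducibles, α divides a subproduct of at most two of them, and there is a product of two irreducibles divisible by α such that α divides neither factor. -/
/-! Every prime ideal factor of `(α)` is non-principal: a principal one would be a proper principal
ideal dividing `(α)`, hence equal to `(α)` by irreducibility, making `α` prime. In a class group of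
order two any two non-principal classes multiply to the trivial class, so for two prime factors
`P, Q` of `(α)` the ideal `PQ` is again proper, principal and divides `(α)`; thus `(α) = PQ`.
Then `α ∣ ∏ aᵢ` means that `P` and `Q` each divide one of the `(aᵢ)`, which bounds `ω(α)` by two.
Since `α` is not prime, `α ∣ ab` with `α ∤ a, b`; applying this bound to the irreducible factors of
`a` and `b` produces the two irreducibles whose product, but neither factor, is divisible by `α`. -/

open scoped nonZeroDivisors

lemma eq_of_ne_one_of_card_eq_two {G : Type*} [Group G] (h2 : Nat.card G = 2) {a b : G}
    (ha : a ≠ 1) (hb : b ≠ 1) : a = b :=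
  ((Nat.card_eq_two_iff' 1).mp h2).unique ha hb

namespace ClassGroup

variable {R : Type*} [CommRing R] [IsDedekindDomain R]

lemma isPrincipal_mul_of_card_eq_two (hclass : Nat.card (ClassGroup R) = 2) {I J : Ideal R}
    (hI : I ∈ (Ideal R)⁰) (hJ : J ∈ (Ideal R)⁰)
    (hIp : ¬I.IsPrincipal) (hJp : ¬J.IsPrincipal) : (I * J).IsPrincipal := by
  rw [← mk0_eq_one_iff (mul_mem hI hJ)]
  have hIJ : mk0 ⟨I, hI⟩ = mk0 ⟨J, hJ⟩ :=
    eq_of_ne_one_of_card_eq_two hclass (mt (mk0_eq_one_iff hI).mp hIp)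
      (mt (mk0_eq_one_iff hJ).mp hJp)
  change mk0 (⟨I, hI⟩ * ⟨J, hJ⟩) = 1
  rw [map_mul, hIJ, ← sq, ← hclass]
  exact pow_card_eq_one'

end ClassGroup

section Irreducible

variable {R : Type*} [CommRing R] [IsDomain R] {α : R}

lemma Irreducible.eq_span_singleton_of_isPrincipal_of_dvd (hα : Irreducible α) {I : Ideal R}
    (hI : I.IsPrincipal) (hdvd : I ∣ Ideal.span {α}) (hne : I ≠ ⊤) : I = Ideal.span {α} := by
  rw [← Ideal.span_singleton_generator I] at hdvd hne ⊢
  have hgα : hI.generator ∣ α :=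
    Ideal.span_singleton_le_span_singleton.mp (Ideal.le_of_dvd hdvd)
  have hnu : ¬IsUnit hI.generator := mt Ideal.span_singleton_eq_top.mpr hne
  refine Ideal.span_singleton_eq_span_singleton.mpr (Associated.symm ?_)
  exact not_not.mp (mt (hα.isUnit_iff_not_associated_of_dvd hgα).mpr hnu)

lemma Irreducible.not_isPrincipal_of_prime_dvd_span_singleton (hα : Irreducible α)
    (hnp : ¬Prime α) {P : Ideal R} (hP : P.IsPrime) (hdvd : P ∣ Ideal.span {α}) :
    ¬P.IsPrincipal := fun hPp ↦ by
  rw [hα.eq_span_singleton_of_isPrincipal_of_dvd hPp hdvd hP.ne_top] at hP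
  exact hnp ((Ideal.span_singleton_prime hα.ne_zero).mp hP)

end Irreducible

lemma exists_subset_card_le_two_mul_dvd_prod {M : Type*} [CommMonoidWithZero M]
    [IsCancelMulZero M] {p q : M} (hp : Prime p) (hq : Prime q) {ι : Type*} [DecidableEq ι]
    {s : Finset ι} {f : ι → M}
    (h : p * q ∣ ∏ i ∈ s, f i) : ∃ T ⊆ s, T.card ≤ 2 ∧ p * q ∣ ∏ i ∈ T, f i := by
  obtain ⟨i, hi, c, hc⟩ := hp.exists_mem_finset_dvd (dvd_of_mul_right_dvd h)
  rw [← Finset.mul_prod_erase s f hi, hc, mul_assoc, mul_dvd_mul_iff_left hp.ne_zero] at h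
  rcases hq.dvd_mul.mp h with hqc | hqrest
  · exact ⟨{i}, by simpa using hi, by simp, by simpa [hc] using mul_dvd_mul_left p hqc⟩
  · obtain ⟨j, hj, hqj⟩ := hq.exists_mem_finset_dvd hqrest
    refine ⟨{i, j}, Finset.insert_subset hi (by simpa using Finset.mem_of_mem_erase hj),
      Finset.card_le_two, ?_⟩
    rw [Finset.prod_pair (Finset.ne_of_mem_erase hj).symm, hc]
    exact mul_dvd_mul (dvd_mul_right p c) hqj

section Dedekind

variable {R : Type*} [CommRing R] [IsDedekindDomain R] {α : R}

lemma exists_subset_card_le_two_dvd_prod_of_span_eq_mul {P Q : Ideal R} (hP : Prime P)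
    (hQ : Prime Q) (hPQ : Ideal.span {α} = P * Q) {ι : Type*} [DecidableEq ι] {s : Finset ι}
    {f : ι → R} (h : α ∣ ∏ i ∈ s, f i) : ∃ T ⊆ s, T.card ≤ 2 ∧ α ∣ ∏ i ∈ T, f i := by
  have hspan (x : R) : α ∣ x ↔ P * Q ∣ Ideal.span {x} := by
    rw [← hPQ, Ideal.dvd_iff_le, Ideal.span_singleton_le_span_singleton]
  simp only [hspan, ← Ideal.prod_span_singleton] at h ⊢
  exact exists_subset_card_le_two_mul_dvd_prod hP hQ h

lemma Irreducible.exists_span_singleton_eq_mul_of_not_prime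
    (hclass : Nat.card (ClassGroup R) = 2) (hα : Irreducible α) (hnp : ¬Prime α) :
    ∃ P Q : Ideal R, Prime P ∧ Prime Q ∧ Ideal.span {α} = P * Q := by
  obtain ⟨s, hs, hsα⟩ := UniqueFactorizationMonoid.exists_prime_factors (Ideal.span {α})
    (by simpa [Ideal.span_singleton_eq_bot] using hα.ne_zero)
  rw [associated_iff_eq] at hsα
  have hnonprin : ∀ P ∈ s, ¬P.IsPrincipal := fun P hP ↦
    hα.not_isPrincipal_of_prime_dvd_span_singleton hnp (Ideal.isPrime_of_prime (hs P hP))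
      (hsα ▸ Multiset.dvd_prod hP)
  obtain ⟨P, hPs⟩ := Multiset.exists_mem_of_ne_zero (s := s) fun hs0 ↦
    hα.not_isUnit (Ideal.span_singleton_eq_top.mp (by simpa [hs0] using hsα.symm))
  obtain ⟨t, rfl⟩ := Multiset.exists_cons_of_mem hPs
  obtain ⟨Q, hQt⟩ := Multiset.exists_mem_of_ne_zero (s := t) fun ht0 ↦
    hnonprin P hPs (by rw [show P = Ideal.span {α} by simpa [ht0] using hsα]; exact ⟨⟨α, rfl⟩⟩)
  obtain ⟨u, rfl⟩ := Multiset.exists_cons_of_mem hQt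
  have hP : Prime P := hs P (by simp)
  have hQ : Prime Q := hs Q (by simp)
  have hPQ : (P * Q).IsPrincipal := ClassGroup.isPrincipal_mul_of_card_eq_two hclass
    (mem_nonZeroDivisors_of_ne_zero hP.ne_zero) (mem_nonZeroDivisors_of_ne_zero hQ.ne_zero)
    (hnonprin P (by simp)) (hnonprin Q (by simp))
  have hdvd : P * Q ∣ Ideal.span {α} := hsα ▸ ⟨u.prod, by simp [mul_assoc]⟩
  have hne : P * Q ≠ ⊤ := fun h ↦
    (Ideal.isPrime_of_prime hP).ne_top (top_le_iff.mp (h ▸ Ideal.mul_le_left))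
  exact ⟨P, Q, hP, hQ, (hα.eq_span_singleton_of_isPrincipal_of_dvd hPQ hdvd hne).symm⟩

end Dedekind

lemma exists_irreducible_dvd_mul_of_not_prime {M : Type*} [CommMonoidWithZero M] [WfDvdMonoid M]
    {α : M} (hα0 : α ≠ 0) (hαu : ¬IsUnit α) (hnp : ¬Prime α)
    (hω : ∀ (t : ℕ) (a : Fin t → M), (∀ i, Irreducible (a i)) → α ∣ ∏ i, a i →
      ∃ T : Finset (Fin t), T.card ≤ 2 ∧ α ∣ ∏ i ∈ T, a i) :
    ∃ b c : M, Irreducible b ∧ Irreducible c ∧ α ∣ b * c ∧ ¬α ∣ b ∧ ¬α ∣ c := by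
  obtain ⟨a, b, hab, ha, hb⟩ : ∃ a b, α ∣ a * b ∧ ¬α ∣ a ∧ ¬α ∣ b := by
    simpa [Prime, hα0, hαu] using hnp
  obtain ⟨fa, hfa, hfa_prod⟩ := WfDvdMonoid.exists_factors a (by rintro rfl; exact ha (dvd_zero α))
  obtain ⟨fb, hfb, hfb_prod⟩ := WfDvdMonoid.exists_factors b (by rintro rfl; exact hb (dvd_zero α))
  set l := (fa + fb).toList
  have hl (i : Fin l.length) : Irreducible l[(i : ℕ)] ∧ ¬α ∣ l[(i : ℕ)] := by
    rcases Multiset.mem_add.mp (Multiset.mem_toList.mp (l.getElem_mem i.2)) with hx | hx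
    · exact ⟨hfa _ hx, fun h ↦ ha (h.trans ((Multiset.dvd_prod hx).trans hfa_prod.dvd))⟩
    · exact ⟨hfb _ hx, fun h ↦ hb (h.trans ((Multiset.dvd_prod hx).trans hfb_prod.dvd))⟩
  have hαl : α ∣ ∏ i : Fin l.length, l[(i : ℕ)] := by
    rw [Fin.prod_univ_getElem, Multiset.prod_toList, Multiset.prod_add]
    exact (hfa_prod.mul_mul hfb_prod).dvd_iff_dvd_right.mpr hab
  obtain ⟨T, hT, hαT⟩ := hω l.length (fun i ↦ l[(i : ℕ)]) (fun i ↦ (hl i).1) hαl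
  obtain h | h | h : T.card = 0 ∨ T.card = 1 ∨ T.card = 2 := by omega
  · rw [Finset.card_eq_zero.mp h, Finset.prod_empty] at hαT
    exact absurd (isUnit_of_dvd_one hαT) hαu
  · obtain ⟨i, rfl⟩ := Finset.card_eq_one.mp h
    rw [Finset.prod_singleton] at hαT
    exact absurd hαT (hl i).2
  · obtain ⟨i, j, hij, rfl⟩ := Finset.card_eq_two.mp h
    rw [Finset.prod_pair hij] at hαT
    exact ⟨_, _, (hl i).1, (hl j).1, hαT, (hl i).2, (hl j).2⟩

theorem omega_eq_two_of_class_number_two_general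
    {R : Type*} [CommRing R] [IsDedekindDomain R]
    (hclass : Nat.card (ClassGroup R) = 2)
    (α : R) (hα : Irreducible α) (hnp : ¬Prime α) :
    (∀ (t : ℕ) (a : Fin t → R), (∀ i, Irreducible (a i)) → α ∣ ∏ i, a i →
        ∃ T : Finset (Fin t), T.card ≤ 2 ∧ α ∣ ∏ i ∈ T, a i) ∧
      (∃ b c : R, Irreducible b ∧ Irreducible c ∧ α ∣ b * c ∧ ¬α ∣ b ∧ ¬α ∣ c) := by
  obtain ⟨P, Q, hP, hQ, hPQ⟩ := hα.exists_span_singleton_eq_mul_of_not_prime hclass hnp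
  have hω : ∀ (t : ℕ) (a : Fin t → R), (∀ i, Irreducible (a i)) → α ∣ ∏ i, a i →
      ∃ T : Finset (Fin t), T.card ≤ 2 ∧ α ∣ ∏ i ∈ T, a i := fun _ _ _ h ↦ by
    obtain ⟨T, -, hT⟩ := exists_subset_card_le_two_dvd_prod_of_span_eq_mul hP hQ hPQ h
    exact ⟨T, hT⟩
  exact ⟨hω, exists_irreducible_dvd_mul_of_not_prime hα.ne_zero hα.not_isUnit hnp hω⟩

theorem omega_eq_two_of_class_number_two
    {R : Type*} [CommRing R] [IsDomain R] [IsDedekindDomain R]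
    (hclass : Nat.card (ClassGroup R) = 2)
    (α : R) (hα : Irreducible α) (hnp : ¬Prime α) :
    (∀ (t : ℕ) (a : Fin t → R), (∀ i, Irreducible (a i)) → α ∣ ∏ i, a i →
        ∃ T : Finset (Fin t), T.card ≤ 2 ∧ α ∣ ∏ i ∈ T, a i) ∧
      (∃ b c : R, Irreducible b ∧ Irreducible c ∧ α ∣ b * c ∧ ¬α ∣ b ∧ ¬α ∣ c) :=
  omega_eq_two_of_class_number_two_general hclass α hα hnp
end

section
/- Let R be a Dedekind domain in which every ideal class contains a nonzero prime ideal, and suppose the class group contains an element g of order n > 2. Then there exist an irreducible x and irreducibles α₁,...,αₙ such that x divides α₁⋯αₙ but x divides no proper subproduct; consequently ω(x) ≥ n. -/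
/-!
Take nonzero primes `𝔭 ∈ g` and `𝔮 ∈ g⁻¹`; since `g ≠ g⁻¹` they are distinct. Let `x` generate
`𝔭 ^ n` and `a` generate `𝔭 𝔮`. Both are irreducible because the only principal ideals dividing
`𝔭 ^ n` resp. `𝔭 𝔮` are the trivial ones, `𝔭 ^ i` being non-principal for `0 < i < n`. Finally
`(a ^ k) = 𝔭 ^ k 𝔮 ^ k` is divisible by `𝔭 ^ n` exactly when `k ≥ n`, so `x ∣ a ^ n` while `x`
divides no product of fewer than `n` copies of `a`.
-/

open Ideal
open scoped nonZeroDivisors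

lemma ne_inv_of_two_lt_orderOf {G : Type*} [Group G] {g : G} (hg : 2 < orderOf g) : g ≠ g⁻¹ := by
  intro h
  have : orderOf g ∣ 2 := orderOf_dvd_of_pow_eq_one (by rwa [sq, mul_eq_one_iff_eq_inv])
  have := Nat.le_of_dvd two_pos this
  omega

lemma prime_pow_dvd_mul_pow_iff {M : Type*} [CommMonoidWithZero M] [IsCancelMulZero M] {p q : M}
    (hp : Prime p) (hpq : ¬p ∣ q) {n k : ℕ} : p ^ n ∣ (p * q) ^ k ↔ n ≤ k := by
  refine ⟨fun h => ?_, fun h => mul_pow p q k ▸ (pow_dvd_pow p h).mul_right _⟩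
  by_contra! hlt
  have h' : p ^ k * p ^ (n - k) ∣ p ^ k * q ^ k := by
    rwa [← pow_add, Nat.add_sub_of_le hlt.le, ← mul_pow]
  have hpk : p ∣ q ^ k :=
    (dvd_pow_self p (Nat.sub_ne_zero_of_lt hlt)).trans
      ((mul_dvd_mul_iff_left (pow_ne_zero k hp.ne_zero)).mp h')
  exact hpq (hp.dvd_of_dvd_pow hpk)

section Domain

variable {R : Type*} [CommRing R] [IsDomain R]

lemma irreducible_of_principal_dvd_span_singleton {x : R} (hx0 : span {x} ≠ ⊥) (hx : span {x} ≠ ⊤)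
    (h : ∀ u : R, span {u} ∣ span {x} → span {u} = ⊤ ∨ span {u} = span {x}) :
    Irreducible x := by
  refine ⟨fun hu => hx (span_singleton_eq_top.mpr hu), fun u v huv => ?_⟩
  subst huv
  rcases h u ⟨span {v}, by rw [span_singleton_mul_span_singleton]⟩ with hu | hu
  · exact Or.inl (span_singleton_eq_top.mp hu)
  · obtain ⟨w, hw⟩ := span_singleton_eq_span_singleton.mp hu
    exact Or.inr (mul_left_cancel₀ (left_ne_zero_of_mul (mt span_singleton_eq_bot.mpr hx0)) hw ▸ w.isUnit)

end Domain

section Dedekind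

variable {R : Type*} [CommRing R] [IsDedekindDomain R]

lemma isPrincipal_pow_iff_orderOf_dvd (I : (Ideal R)⁰) (i : ℕ) :
    ((I : Ideal R) ^ i).IsPrincipal ↔ orderOf (ClassGroup.mk0 I) ∣ i := by
  rw [orderOf_dvd_iff_pow_eq_one, ← map_pow]
  exact (ClassGroup.mk0_eq_one_iff (I ^ i).2).symm

lemma not_isPrincipal_pow_of_lt_orderOf (I : (Ideal R)⁰) {i : ℕ} (hi0 : 0 < i)
    (hi : i < orderOf (ClassGroup.mk0 I)) : ¬((I : Ideal R) ^ i).IsPrincipal := fun h =>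
  hi0.ne' (Nat.eq_zero_of_dvd_of_lt ((isPrincipal_pow_iff_orderOf_dvd I i).mp h) hi)

lemma isPrincipal_mul_iff (I J : (Ideal R)⁰) :
    ((I : Ideal R) * J).IsPrincipal ↔ ClassGroup.mk0 I * ClassGroup.mk0 J = 1 := by
  rw [← map_mul]
  exact (ClassGroup.mk0_eq_one_iff (I * J).2).symm

lemma irreducible_of_span_singleton_eq_prime_pow {𝔭 : Ideal R} (h𝔭 : Prime 𝔭) {n : ℕ}
    (hn : n ≠ 0) (hnp : ∀ i, 0 < i → i < n → ¬(𝔭 ^ i).IsPrincipal) {x : R}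
    (hx : span {x} = 𝔭 ^ n) : Irreducible x := by
  have hpow_ne : ∀ {i}, 0 < i → 𝔭 ^ i ≠ ⊤ := fun hi h =>
    h𝔭.not_isUnit (isUnit_of_dvd_unit (dvd_pow_self 𝔭 hi.ne') (isUnit_iff.mpr h))
  refine irreducible_of_principal_dvd_span_singleton ?_ (hx ▸ hpow_ne (Nat.pos_of_ne_zero hn)) ?_
  · exact hx ▸ pow_ne_zero n h𝔭.ne_zero
  · intro u hu
    obtain ⟨i, hin, hi⟩ := (dvd_prime_pow h𝔭 n).mp (hx ▸ hu)
    rw [associated_iff_eq] at hi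
    rcases Nat.eq_zero_or_pos i with rfl | hi0
    · exact Or.inl (by rw [hi, pow_zero, one_eq_top])
    rcases hin.lt_or_eq with hlt | rfl
    · exact absurd ⟨u, by rw [← hi, submodule_span_eq]⟩ (hnp i hi0 hlt)
    · exact Or.inr (hi.trans hx.symm)

lemma irreducible_of_span_singleton_eq_mul {𝔭 𝔮 : Ideal R} (h𝔭 : Irreducible 𝔭)
    (h𝔮 : Irreducible 𝔮) (h𝔭np : ¬𝔭.IsPrincipal) (h𝔮np : ¬𝔮.IsPrincipal) {x : R}
    (hx : span {x} = 𝔭 * 𝔮) : Irreducible x := by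
  have h_factor : ∀ {𝔯 J : Ideal R}, Irreducible 𝔯 → J ∣ 𝔯 → J = ⊤ ∨ J = 𝔯 := fun h𝔯 hJ => by
    rcases h𝔯.dvd_iff.mp hJ with hJ | hJ
    · exact Or.inl (isUnit_iff.mp hJ)
    · exact Or.inr (associated_iff_eq.mp hJ).symm
  refine irreducible_of_principal_dvd_span_singleton (hx ▸ mul_ne_zero h𝔭.ne_zero h𝔮.ne_zero) ?_ ?_
  · exact fun h => h𝔭.not_isUnit (isUnit_of_dvd_unit (Dvd.intro _ hx.symm) (isUnit_iff.mpr h))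
  · intro u hu
    obtain ⟨J₁, J₂, hJ₁, hJ₂, hu_eq⟩ := exists_dvd_and_dvd_of_dvd_mul (hx ▸ hu)
    have hprincipal : (J₁ * J₂).IsPrincipal := ⟨u, by rw [← hu_eq, submodule_span_eq]⟩
    rcases h_factor h𝔭 hJ₁ with rfl | rfl <;> rcases h_factor h𝔮 hJ₂ with rfl | rfl
    · exact Or.inl (by rw [hu_eq, top_mul])
    · exact absurd (by rwa [top_mul] at hprincipal) h𝔮np
    · exact absurd (by rwa [mul_top] at hprincipal) h𝔭np
    · exact Or.inr (hu_eq.trans hx.symm)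

lemma dvd_pow_iff_of_span_singleton_eq {𝔭 𝔮 : Ideal R} (h𝔭 : Prime 𝔭) (h𝔭𝔮 : ¬𝔭 ∣ 𝔮) {x a : R}
    {n : ℕ} (hx : span {x} = 𝔭 ^ n) (ha : span {a} = 𝔭 * 𝔮) (k : ℕ) : x ∣ a ^ k ↔ n ≤ k := by
  rw [← span_singleton_le_span_singleton, ← dvd_iff_le, ← span_singleton_pow, hx, ha,
    prime_pow_dvd_mul_pow_iff h𝔭 h𝔭𝔮]

end Dedekind

theorem omega_ge_order_of_class_general
    {R : Type*} [CommRing R] [IsDedekindDomain R]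
    (hprimes : ∀ c : ClassGroup R, ∃ (𝔭 : Ideal R) (h𝔭 : 𝔭 ∈ nonZeroDivisors (Ideal R)),
      𝔭.IsPrime ∧ 𝔭 ≠ ⊥ ∧ ClassGroup.mk0 ⟨𝔭, h𝔭⟩ = c)
    (g : ClassGroup R) (n : ℕ) (hn : 2 < n) (hg : orderOf g = n) :
    ∃ x : R, Irreducible x ∧ ∃ a : Fin n → R, (∀ i, Irreducible (a i)) ∧
      x ∣ ∏ i, a i ∧
      ∀ T : Finset (Fin n), T ≠ Finset.univ → ¬x ∣ ∏ i ∈ T, a i := by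
  obtain ⟨𝔭, h𝔭, h𝔭prime, h𝔭bot, h𝔭g⟩ := hprimes g
  obtain ⟨𝔮, h𝔮, h𝔮prime, h𝔮bot, h𝔮g⟩ := hprimes g⁻¹
  have hP : Prime 𝔭 := prime_of_isPrime h𝔭bot h𝔭prime
  have hQ : Prime 𝔮 := prime_of_isPrime h𝔮bot h𝔮prime
  have h𝔭𝔮 : ¬𝔭 ∣ 𝔮 := fun h => by
    obtain rfl := (prime_dvd_prime_iff_eq hP hQ).mp h
    exact ne_inv_of_two_lt_orderOf (hg ▸ hn) (h𝔭g.symm.trans h𝔮g)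
  have h𝔭ord : orderOf (ClassGroup.mk0 ⟨𝔭, h𝔭⟩) = n := h𝔭g ▸ hg
  have h𝔮ord : orderOf (ClassGroup.mk0 ⟨𝔮, h𝔮⟩) = n := by rw [h𝔮g, orderOf_inv, hg]
  have : (𝔭 ^ n).IsPrincipal := (isPrincipal_pow_iff_orderOf_dvd ⟨𝔭, h𝔭⟩ n).mpr h𝔭ord.dvd
  have : (𝔭 * 𝔮).IsPrincipal :=
    (isPrincipal_mul_iff ⟨𝔭, h𝔭⟩ ⟨𝔮, h𝔮⟩).mpr (by rw [h𝔭g, h𝔮g, mul_inv_cancel])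
  set x := Submodule.IsPrincipal.generator (𝔭 ^ n)
  set a := Submodule.IsPrincipal.generator (𝔭 * 𝔮)
  have hx : span {x} = 𝔭 ^ n := span_singleton_generator _
  have ha : span {a} = 𝔭 * 𝔮 := span_singleton_generator _
  refine ⟨x, irreducible_of_span_singleton_eq_prime_pow hP (by omega)
      (fun i hi hin => not_isPrincipal_pow_of_lt_orderOf _ hi (h𝔭ord ▸ hin)) hx,
    fun _ => a, fun _ => irreducible_of_span_singleton_eq_mul hP.irreducible hQ.irreducible
      ?_ ?_ ha, ?_, fun T hT => ?_⟩
  · simpa using not_isPrincipal_pow_of_lt_orderOf ⟨𝔭, h𝔭⟩ one_pos (by omega)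
  · simpa using not_isPrincipal_pow_of_lt_orderOf ⟨𝔮, h𝔮⟩ one_pos (by omega)
  · rw [Finset.prod_const, Finset.card_univ, Fintype.card_fin,
      dvd_pow_iff_of_span_singleton_eq hP h𝔭𝔮 hx ha]
  · rw [Finset.prod_const, dvd_pow_iff_of_span_singleton_eq hP h𝔭𝔮 hx ha, not_le]
    simpa using (Finset.card_lt_iff_ne_univ T).mpr hT

theorem omega_ge_order_of_class
    {R : Type*} [CommRing R] [IsDomain R] [IsDedekindDomain R]
    (hprimes : ∀ c : ClassGroup R, ∃ (𝔭 : Ideal R) (h𝔭 : 𝔭 ∈ nonZeroDivisors (Ideal R)),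
      𝔭.IsPrime ∧ 𝔭 ≠ ⊥ ∧ ClassGroup.mk0 ⟨𝔭, h𝔭⟩ = c)
    (g : ClassGroup R) (n : ℕ) (hn : 2 < n) (hg : orderOf g = n) :
    ∃ x : R, Irreducible x ∧ ∃ a : Fin n → R, (∀ i, Irreducible (a i)) ∧
      x ∣ ∏ i, a i ∧
      ∀ T : Finset (Fin n), T ≠ Finset.univ → ¬x ∣ ∏ i ∈ T, a i :=
  omega_ge_order_of_class_general hprimes g n hn hg
end

section
/- Let R be a Dedekind domain in which every ideal class contains a nonzero prime ideal. Then the class group of R has at most 2 elements if and only if sup{ω(α) : α irreducible in R} ≤ 2. -/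
/-!
Write `Ω(x)` (`cardIdealFactors x`) for the number of prime ideal factors of `(x)`, counted with
multiplicity. Peeling off one prime at a time shows that if `x` divides a product, it divides a
subproduct of at most `Ω(x)` factors. If the class group has at most two elements, every sequence
of at least three classes has a proper nonempty subsequence with product `1`, so an irreducible
`x` has `Ω(x) ≤ 2`.

Conversely, if `g`, `h` and `gh` are nontrivial classes, take primes `Pᵢ` in the classes
`g, h, (gh)⁻¹` and `Qᵢ` in their inverses. Then `(γ) = P₀P₁P₂` and `(aᵢ) = PᵢQᵢ` define elements
with `γ ∣ a₀a₁a₂`. All these primes are nonprincipal, so no divisor of `γ` or `aᵢ` has `Ω = 1`: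
hence `γ` and the `aᵢ` are irreducible, and `γ ∤ aᵢaⱼ`, since `Ω(aᵢaⱼ) = Ω(γ) + 1`.
-/

open Ideal UniqueFactorizationMonoid

section Group

variable {G : Type*}

theorem mul_eq_one_of_forall_eq_or_eq [Group G] (h2 : ∃ a b : G, ∀ g : G, g = a ∨ g = b)
    {g h : G} (hg : g ≠ 1) (hh : h ≠ 1) : g * h = 1 := by
  obtain ⟨a, b, hab⟩ := h2
  by_contra hgh
  -- otherwise `1`, `g` and `g * h` would be three distinct elements
  have hghg : g * h ≠ g := fun e => hh (mul_eq_left.mp e)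
  rcases hab 1 with h1 | h1 <;> rcases hab g with h2 | h2 <;> rcases hab (g * h) with h3 | h3 <;>
    grind

theorem exists_ne_one_mul_ne_one [Group G] (h2 : ¬∃ a b : G, ∀ g : G, g = a ∨ g = b) :
    ∃ g h : G, g ≠ 1 ∧ h ≠ 1 ∧ g * h ≠ 1 := by
  push Not at h2
  obtain ⟨g, hg, -⟩ := h2 1 1
  obtain ⟨h, hh, hgh⟩ := h2 1 g⁻¹
  exact ⟨g, h, hg, hh, fun e => hgh (eq_inv_of_mul_eq_one_right e)⟩

theorem Multiset.exists_le_card_pos_card_lt_prod_map_eq_one [CommGroup G]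
    (h2 : ∃ a b : G, ∀ g : G, g = a ∨ g = b) {ι : Type*} (c : ι → G) {s : Multiset ι}
    (hs : 3 ≤ card s) :
    ∃ t ≤ s, 0 < card t ∧ card t < card s ∧ (t.map c).prod = 1 := by
  obtain ⟨x, hx⟩ := card_pos_iff_exists_mem.mp (by omega : 0 < card s)
  obtain ⟨r, rfl⟩ := exists_cons_of_mem hx
  obtain ⟨y, hy⟩ := card_pos_iff_exists_mem.mp (by simp at hs; omega : 0 < card r)
  obtain ⟨r, rfl⟩ := exists_cons_of_mem hy
  simp only [card_cons] at hs ⊢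
  by_cases hcx : c x = 1
  · exact ⟨{x}, by simp, by simp, by simp, by simpa⟩
  by_cases hcy : c y = 1
  · exact ⟨{y}, by simp, by simp, by simp, by simpa⟩
  refine ⟨{x, y}, cons_le_cons x (cons_le_cons y (zero_le r)), by simp, by simp; omega, ?_⟩
  simpa using mul_eq_one_of_forall_eq_or_eq h2 hcx hcy

end Group

theorem exists_subset_card_le_prod_dvd {M ι : Type*} [CommMonoidWithZero M]
    [IsCancelMulZero M] [DecidableEq ι] {ps : Multiset M} (hps : ∀ p ∈ ps, Prime p)
    {s : Finset ι} {f : ι → M} (h : ps.prod ∣ ∏ i ∈ s, f i) :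
    ∃ T ⊆ s, T.card ≤ Multiset.card ps ∧ ps.prod ∣ ∏ i ∈ T, f i := by
  induction ps using Multiset.induction_on generalizing f with
  | empty => exact ⟨∅, Finset.empty_subset s, by simp, by simp⟩
  | cons p ps ih =>
    have hp : Prime p := hps p (Multiset.mem_cons_self p ps)
    rw [Multiset.prod_cons] at h ⊢
    obtain ⟨j, hj, z, hz⟩ := hp.exists_mem_finset_dvd (dvd_of_mul_right_dvd h)
    -- divide the factor `f j` by `p` and recurse on the remaining primes
    have hsplit : ∀ u : Finset ι, j ∈ u →
        ∏ i ∈ u, f i = p * ∏ i ∈ u, Function.update f j z i := by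
      intro u hu
      rw [Finset.prod_update_of_mem hu, Finset.prod_eq_mul_prod_sdiff_singleton j f, hz,
        mul_assoc]
      exact fun h => absurd hu h
    obtain ⟨T, hTs, hT, hdvd⟩ := ih (fun q hq => hps q (Multiset.mem_cons_of_mem hq))
      ((mul_dvd_mul_iff_left hp.ne_zero).mp (hsplit s hj ▸ h))
    refine ⟨insert j T, Finset.insert_subset hj hTs,
      (Finset.card_insert_le j T).trans (by simpa using hT), ?_⟩
    rw [hsplit _ (Finset.mem_insert_self j T)]
    exact mul_dvd_mul_left p
      (hdvd.trans (Finset.prod_dvd_prod_of_subset _ _ _ (Finset.subset_insert j T)))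

section Dedekind

variable {R : Type*} [CommRing R] [IsDedekindDomain R]

open scoped Classical in
noncomputable def idealClass (I : Ideal R) : ClassGroup R :=
  if h : I ∈ nonZeroDivisors (Ideal R) then ClassGroup.mk0 ⟨I, h⟩ else 1

theorem idealClass_of_mem {I : Ideal R} (h : I ∈ nonZeroDivisors (Ideal R)) :
    idealClass I = ClassGroup.mk0 ⟨I, h⟩ := by
  rw [idealClass, dif_pos h]

theorem idealClass_eq_one_iff {I : Ideal R} (hI : I ≠ ⊥) :
    idealClass I = 1 ↔ I.IsPrincipal := by
  rw [idealClass_of_mem (mem_nonZeroDivisors_of_ne_zero hI), ClassGroup.mk0_eq_one_iff]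

theorem idealClass_mul {I J : Ideal R} (hI : I ≠ ⊥) (hJ : J ≠ ⊥) :
    idealClass (I * J) = idealClass I * idealClass J := by
  rw [idealClass_of_mem (mem_nonZeroDivisors_of_ne_zero hI),
    idealClass_of_mem (mem_nonZeroDivisors_of_ne_zero hJ),
    idealClass_of_mem (mem_nonZeroDivisors_of_ne_zero (mul_ne_zero hI hJ)), ← map_mul]
  rfl

theorem idealClass_multiset_prod {s : Multiset (Ideal R)} (hs : ⊥ ∉ s) :
    idealClass s.prod = (s.map idealClass).prod := by
  induction s using Multiset.induction_on with
  | empty =>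
    rw [Multiset.prod_zero, Multiset.map_zero, Multiset.prod_zero,
      idealClass_of_mem (one_mem _)]
    exact map_one ClassGroup.mk0
  | cons I s ih =>
    rw [Multiset.mem_cons, not_or] at hs
    rw [Multiset.prod_cons, Multiset.map_cons, Multiset.prod_cons,
      idealClass_mul (Ne.symm hs.1) (Multiset.prod_ne_zero hs.2), ih hs.2]

theorem exists_span_singleton_eq_of_idealClass_eq_one {I : Ideal R} (hI : I ≠ ⊥)
    (h : idealClass I = 1) : ∃ x : R, span {x} = I :=
  have := (idealClass_eq_one_iff hI).mp h
  ⟨_, I.span_singleton_generator⟩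

theorem exists_prime_idealClass_eq
    (hprimes : ∀ c : ClassGroup R, ∃ (𝔭 : Ideal R) (h𝔭 : 𝔭 ∈ nonZeroDivisors (Ideal R)),
      𝔭.IsPrime ∧ 𝔭 ≠ ⊥ ∧ ClassGroup.mk0 ⟨𝔭, h𝔭⟩ = c) (c : ClassGroup R) :
    ∃ P : Ideal R, P.IsPrime ∧ P ≠ ⊥ ∧ idealClass P = c := by
  obtain ⟨P, hP0, hP, hPbot, hPc⟩ := hprimes c
  exact ⟨P, hP, hPbot, (idealClass_of_mem hP0).trans hPc⟩

noncomputable def cardIdealFactors (x : R) : ℕ :=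
  Multiset.card (normalizedFactors (span {x}))

theorem cardIdealFactors_zero : cardIdealFactors (0 : R) = 0 := by
  rw [cardIdealFactors, span_singleton_eq_bot.mpr rfl, ← Submodule.zero_eq_bot,
    normalizedFactors_zero, Multiset.card_zero]

theorem cardIdealFactors_mul {x y : R} (hx : x ≠ 0) (hy : y ≠ 0) :
    cardIdealFactors (x * y) = cardIdealFactors x + cardIdealFactors y := by
  simp [cardIdealFactors, ← span_singleton_mul_span_singleton, normalizedFactors_mul, hx, hy]

theorem cardIdealFactors_le_of_dvd {x y : R} (hx : x ≠ 0) (h : y ∣ x) :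
    cardIdealFactors y ≤ cardIdealFactors x := by
  obtain ⟨z, rfl⟩ := h
  rw [cardIdealFactors_mul (left_ne_zero_of_mul hx) (right_ne_zero_of_mul hx)]
  exact Nat.le_add_right _ _

theorem cardIdealFactors_eq_zero_iff {x : R} (hx : x ≠ 0) :
    cardIdealFactors x = 0 ↔ IsUnit x := by
  rw [cardIdealFactors, Multiset.card_eq_zero,
    normalizedFactors_eq_zero_iff (by simpa using hx), isUnit_iff, span_singleton_eq_top]

theorem cardIdealFactors_prod {ι : Type*} {s : Finset ι} {f : ι → R}
    (hf : ∀ i ∈ s, f i ≠ 0) :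
    cardIdealFactors (∏ i ∈ s, f i) = ∑ i ∈ s, cardIdealFactors (f i) := by
  classical
  induction s using Finset.induction_on with
  | empty => simpa using (cardIdealFactors_eq_zero_iff one_ne_zero).mpr isUnit_one
  | insert i s hi ih =>
    rw [Finset.prod_insert hi, Finset.sum_insert hi, cardIdealFactors_mul (hf i (by simp))
      (Finset.prod_ne_zero_iff.mpr fun j hj => hf j (by simp [hj])),
      ih fun j hj => hf j (by simp [hj])]

theorem cardIdealFactors_eq_card {x : R} {s : Multiset (Ideal R)} (hs : ∀ P ∈ s, Prime P)
    (hx : span {x} = s.prod) : cardIdealFactors x = Multiset.card s := by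
  rw [cardIdealFactors, hx, normalizedFactors_prod_of_prime hs]

theorem isPrime_span_singleton_of_cardIdealFactors_eq_one {y : R}
    (hy : cardIdealFactors y = 1) : (span {y}).IsPrime := by
  obtain ⟨P, hP⟩ := Multiset.card_eq_one.mp hy
  have hy0 : y ≠ 0 := by rintro rfl; simp [cardIdealFactors_zero] at hy
  have hyP : span {y} = P := by
    simpa [hP] using
      (Ideal.prod_normalizedFactors_eq_self (I := span {y}) (by simpa using hy0)).symm
  rw [hyP]
  exact isPrime_of_prime (prime_of_normalized_factor (a := span {y}) P (by simp [hP]))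

theorem cardIdealFactors_ne_one_of_dvd {x y : R}
    (hx : ∀ P : Ideal R, P.IsPrime → x ∈ P → ¬P.IsPrincipal) (hyx : y ∣ x) :
    cardIdealFactors y ≠ 1 := fun hy =>
  hx _ (isPrime_span_singleton_of_cardIdealFactors_eq_one hy) (mem_span_singleton.mpr hyx)
    ⟨y, rfl⟩

theorem irreducible_of_cardIdealFactors_le_three {x : R} (h1 : 1 ≤ cardIdealFactors x)
    (h3 : cardIdealFactors x ≤ 3) (hx : ∀ P : Ideal R, P.IsPrime → x ∈ P → ¬P.IsPrincipal) :
    Irreducible x := by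
  have hx0 : x ≠ 0 := by rintro rfl; simp [cardIdealFactors_zero] at h1
  refine ⟨fun hu => by rw [← cardIdealFactors_eq_zero_iff hx0] at hu; omega,
    fun a b hab => ?_⟩
  subst hab
  have ha0 := left_ne_zero_of_mul hx0
  have hb0 := right_ne_zero_of_mul hx0
  have ha1 := cardIdealFactors_ne_one_of_dvd hx (dvd_mul_right a b)
  have hb1 := cardIdealFactors_ne_one_of_dvd hx (dvd_mul_left b a)
  rw [cardIdealFactors_mul ha0 hb0] at h3
  rw [← cardIdealFactors_eq_zero_iff ha0, ← cardIdealFactors_eq_zero_iff hb0]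
  omega

theorem not_dvd_of_cardIdealFactors_eq_add_one {x y : R} (hx0 : x ≠ 0)
    (hx : ∀ P : Ideal R, P.IsPrime → x ∈ P → ¬P.IsPrincipal)
    (h : cardIdealFactors x = cardIdealFactors y + 1) : ¬y ∣ x := by
  rintro ⟨z, rfl⟩
  rw [cardIdealFactors_mul (left_ne_zero_of_mul hx0) (right_ne_zero_of_mul hx0)] at h
  exact cardIdealFactors_ne_one_of_dvd hx (dvd_mul_left z y) (by omega)

theorem exists_subset_card_le_cardIdealFactors_dvd_prod {ι : Type*} [DecidableEq ι] {x : R}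
    (hx : x ≠ 0) {s : Finset ι} {a : ι → R} (h : x ∣ ∏ i ∈ s, a i) :
    ∃ T ⊆ s, T.card ≤ cardIdealFactors x ∧ x ∣ ∏ i ∈ T, a i := by
  have hdvd_iff : ∀ T : Finset ι,
      (normalizedFactors (span {x})).prod ∣ ∏ i ∈ T, span {a i} ↔ x ∣ ∏ i ∈ T, a i := by
    intro T
    rw [Ideal.prod_normalizedFactors_eq_self (by simpa using hx), prod_span_singleton, dvd_iff_le,
      span_singleton_le_span_singleton]
  obtain ⟨T, hTs, hT, hdvd⟩ :=
    exists_subset_card_le_prod_dvd prime_of_normalized_factor ((hdvd_iff s).mpr h)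
  exact ⟨T, hTs, hT, (hdvd_iff T).mp hdvd⟩

theorem not_irreducible_of_isPrincipal_prod {x : R} (hx : x ≠ 0) {t : Multiset (Ideal R)}
    (ht : t ≤ normalizedFactors (span {x})) (ht0 : 0 < Multiset.card t)
    (hlt : Multiset.card t < cardIdealFactors x) (hprin : t.prod.IsPrincipal) :
    ¬Irreducible x := by
  obtain ⟨y, hy⟩ := hprin
  rw [submodule_span_eq] at hy
  have hyx : y ∣ x := by
    rw [← span_singleton_le_span_singleton, ← hy, ← dvd_iff_le,
      ← Ideal.prod_normalizedFactors_eq_self (I := span {x}) (by simpa using hx)]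
    exact Multiset.prod_dvd_prod_of_le ht
  obtain ⟨z, rfl⟩ := hyx
  have hty : cardIdealFactors y = Multiset.card t :=
    cardIdealFactors_eq_card
      (fun P hP => prime_of_normalized_factor P (Multiset.mem_of_le ht hP)) hy.symm
  rw [cardIdealFactors_mul (left_ne_zero_of_mul hx) (right_ne_zero_of_mul hx)] at hlt
  intro hirr
  rcases hirr.isUnit_or_isUnit rfl with hu | hu
  · rw [← cardIdealFactors_eq_zero_iff (left_ne_zero_of_mul hx)] at hu
    omega
  · rw [← cardIdealFactors_eq_zero_iff (right_ne_zero_of_mul hx)] at hu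
    omega

theorem cardIdealFactors_le_two_of_irreducible
    (h2 : ∃ a b : ClassGroup R, ∀ g : ClassGroup R, g = a ∨ g = b) {x : R}
    (hx : Irreducible x) : cardIdealFactors x ≤ 2 := by
  by_contra! h3
  obtain ⟨t, hts, ht0, hlt, h1⟩ :=
    Multiset.exists_le_card_pos_card_lt_prod_map_eq_one h2 idealClass h3
  have hbot : ⊥ ∉ t := fun h =>
    (prime_of_normalized_factor _ (Multiset.mem_of_le hts h)).ne_zero rfl
  refine not_irreducible_of_isPrincipal_prod hx.ne_zero hts ht0 hlt ?_ hx
  rwa [← idealClass_eq_one_iff (Multiset.prod_ne_zero hbot), idealClass_multiset_prod hbot]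

theorem not_isPrincipal_of_span_singleton_eq_prod {x : R} {s : Multiset (Ideal R)}
    (hs : ∀ Q ∈ s, Q.IsPrime ∧ Q ≠ ⊥ ∧ ¬Q.IsPrincipal) (hx : span {x} = s.prod) :
    ∀ P : Ideal R, P.IsPrime → x ∈ P → ¬P.IsPrincipal := by
  intro P hP hxP
  obtain ⟨Q, hQs, hQP⟩ :=
    hP.multiset_prod_le.mp (hx ▸ (span_singleton_le_iff_mem (I := P)).mpr hxP)
  obtain ⟨hQ, hQ0, hQnp⟩ := hs Q hQs
  rwa [← (hQ.isMaximal hQ0).eq_of_le hP.ne_top hQP]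

theorem exists_span_singleton_eq_prod_of_prod_idealClass_eq_one {s : Multiset (Ideal R)}
    (hs : ∀ Q ∈ s, Q.IsPrime ∧ Q ≠ ⊥ ∧ ¬Q.IsPrincipal) (h1 : (s.map idealClass).prod = 1) :
    ∃ x : R, span {x} = s.prod ∧ cardIdealFactors x = Multiset.card s ∧
      ∀ P : Ideal R, P.IsPrime → x ∈ P → ¬P.IsPrincipal := by
  have hbot : ⊥ ∉ s := fun h => (hs ⊥ h).2.1 rfl
  obtain ⟨x, hx⟩ := exists_span_singleton_eq_of_idealClass_eq_one (Multiset.prod_ne_zero hbot)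
    ((idealClass_multiset_prod hbot).trans h1)
  exact ⟨x, hx,
    cardIdealFactors_eq_card (fun Q hQ => prime_of_isPrime (hs Q hQ).2.1 (hs Q hQ).1) hx,
    not_isPrincipal_of_span_singleton_eq_prod hs hx⟩

theorem not_dvd_prod_of_card_le_two {ι : Type*} {γ : R} (hγ : cardIdealFactors γ = 3)
    {a : ι → R} (ha2 : ∀ i, cardIdealFactors (a i) = 2)
    (ha : ∀ i, ∀ P : Ideal R, P.IsPrime → a i ∈ P → ¬P.IsPrincipal)
    {T : Finset ι} (hT : T.card ≤ 2) : ¬γ ∣ ∏ i ∈ T, a i := by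
  have ha0 : ∀ i, a i ≠ 0 := fun i h0 => by simpa [h0, cardIdealFactors_zero] using ha2 i
  have h0 : ∏ i ∈ T, a i ≠ 0 := Finset.prod_ne_zero_iff.mpr fun i _ => ha0 i
  have hcard : cardIdealFactors (∏ i ∈ T, a i) = 2 * T.card := by
    rw [cardIdealFactors_prod fun i _ => ha0 i, Finset.sum_congr rfl fun i _ => ha2 i,
      Finset.sum_const, smul_eq_mul, mul_comm]
  intro hdvd
  have hle := cardIdealFactors_le_of_dvd h0 hdvd
  -- so `T` has two elements and the cofactor would have a single prime ideal factor
  refine not_dvd_of_cardIdealFactors_eq_add_one h0 (fun P hP hmem => ?_) (by omega) hdvd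
  obtain ⟨i, -, hi⟩ := hP.prod_mem_iff.mp hmem
  exact ha i P hP hi

theorem exists_irreducible_not_dvd_prod_card_le_two
    (hprimes : ∀ c : ClassGroup R, ∃ (𝔭 : Ideal R) (h𝔭 : 𝔭 ∈ nonZeroDivisors (Ideal R)),
      𝔭.IsPrime ∧ 𝔭 ≠ ⊥ ∧ ClassGroup.mk0 ⟨𝔭, h𝔭⟩ = c)
    {g h : ClassGroup R} (hg : g ≠ 1) (hh : h ≠ 1) (hgh : g * h ≠ 1) :
    ∃ γ : R, Irreducible γ ∧ ∃ a : Fin 3 → R, (∀ i, Irreducible (a i)) ∧ γ ∣ ∏ i, a i ∧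
      ∀ T : Finset (Fin 3), T.card ≤ 2 → ¬γ ∣ ∏ i ∈ T, a i := by
  set c : Fin 3 → ClassGroup R := ![g, h, (g * h)⁻¹]
  have hc : ∀ i, c i ≠ 1 := by
    intro i
    fin_cases i
    exacts [hg, hh, inv_ne_one.mpr hgh]
  choose P hP hP0 hPc using fun i => exists_prime_idealClass_eq hprimes (c i)
  choose Q hQ hQ0 hQc using fun i => exists_prime_idealClass_eq hprimes (c i)⁻¹
  have hPnp : ∀ i, ¬(P i).IsPrincipal := fun i => by
    rw [← idealClass_eq_one_iff (hP0 i), hPc]; exact hc i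
  have hQnp : ∀ i, ¬(Q i).IsPrincipal := fun i => by
    rw [← idealClass_eq_one_iff (hQ0 i), hQc]; exact inv_ne_one.mpr (hc i)
  obtain ⟨γ, hγ, hγ3, hγnp⟩ :=
    exists_span_singleton_eq_prod_of_prod_idealClass_eq_one (s := Finset.univ.val.map P)
      (fun I hI => by
        obtain ⟨i, -, rfl⟩ := Multiset.mem_map.mp hI
        exact ⟨hP i, hP0 i, hPnp i⟩)
      (by simp [hPc, c])
  choose a ha ha2 hanp using fun i =>
    exists_span_singleton_eq_prod_of_prod_idealClass_eq_one (s := {P i, Q i})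
      (by simpa using ⟨⟨hP i, hP0 i, hPnp i⟩, ⟨hQ i, hQ0 i, hQnp i⟩⟩) (by simp [hPc, hQc])
  simp only [Multiset.card_map, Finset.card_val, Finset.card_univ, Fintype.card_fin] at hγ3
  simp only [Multiset.card_pair] at ha2
  simp only [Multiset.insert_eq_cons, Multiset.prod_cons, Multiset.prod_singleton] at ha
  refine ⟨γ, irreducible_of_cardIdealFactors_le_three (by omega) (by omega) hγnp, a,
    fun i => irreducible_of_cardIdealFactors_le_three (by rw [ha2 i]; norm_num)
      (by rw [ha2 i]; norm_num) (hanp i),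
    ?_, fun T hT => not_dvd_prod_of_card_le_two hγ3 ha2 hanp hT⟩
  rw [← span_singleton_le_span_singleton, ← prod_span_singleton,
    Finset.prod_congr rfl fun i _ => ha i, Finset.prod_mul_distrib, hγ]
  exact Ideal.mul_le_left

end Dedekind

theorem class_number_le_two_iff_omega_le_two_general
    {R : Type*} [CommRing R] [IsDedekindDomain R]
    (hprimes : ∀ c : ClassGroup R, ∃ (𝔭 : Ideal R) (h𝔭 : 𝔭 ∈ nonZeroDivisors (Ideal R)),
      𝔭.IsPrime ∧ 𝔭 ≠ ⊥ ∧ ClassGroup.mk0 ⟨𝔭, h𝔭⟩ = c) :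
    (∃ a b : ClassGroup R, ∀ g : ClassGroup R, g = a ∨ g = b) ↔
      ∀ α : R, Irreducible α →
        ∀ (t : ℕ) (a : Fin t → R), (∀ i, Irreducible (a i)) → α ∣ ∏ i, a i →
          ∃ T : Finset (Fin t), T.card ≤ 2 ∧ α ∣ ∏ i ∈ T, a i := by
  constructor
  · rintro h2 α hα t a - hdvd
    obtain ⟨T, -, hT, hdvdT⟩ := exists_subset_card_le_cardIdealFactors_dvd_prod hα.ne_zero hdvd
    exact ⟨T, hT.trans (cardIdealFactors_le_two_of_irreducible h2 hα), hdvdT⟩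
  · intro hω
    by_contra h2
    obtain ⟨g, h, hg, hh, hgh⟩ := exists_ne_one_mul_ne_one h2
    obtain ⟨γ, hγ, a, ha, hdvd, hT⟩ :=
      exists_irreducible_not_dvd_prod_card_le_two hprimes hg hh hgh
    obtain ⟨T, hT2, hdvdT⟩ := hω γ hγ 3 a ha hdvd
    exact hT T hT2 hdvdT

theorem class_number_le_two_iff_omega_le_two
    {R : Type*} [CommRing R] [IsDomain R] [IsDedekindDomain R]
    (hprimes : ∀ c : ClassGroup R, ∃ (𝔭 : Ideal R) (h𝔭 : 𝔭 ∈ nonZeroDivisors (Ideal R)),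
      𝔭.IsPrime ∧ 𝔭 ≠ ⊥ ∧ ClassGroup.mk0 ⟨𝔭, h𝔭⟩ = c) :
    (∃ a b : ClassGroup R, ∀ g : ClassGroup R, g = a ∨ g = b) ↔
      ∀ α : R, Irreducible α →
        ∀ (t : ℕ) (a : Fin t → R), (∀ i, Irreducible (a i)) → α ∣ ∏ i, a i →
          ∃ T : Finset (Fin t), T.card ≤ 2 ∧ α ∣ ∏ i ∈ T, a i :=
  class_number_le_two_iff_omega_le_two_general hprimes
end
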